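/- arXiv:1411.1660 — 5 statements merged into one kernel-verified Lean document; each statement's English description precedes it below -/
import Mathlib

section
/- Let m be a positive integer, let g and f be probability densities on ℝ with finite moments μ_{2m} = ∫ θ^{2m} g(θ) dθ < ∞ and ν_{2m} = ∫ θ^{2m} f(θ) dθ < ∞, and let ψ_m(y) = y^m + Σ_{k=0}^{m−1} c_k y^k be the polynomial with c_m = 1 and Σ_{k=j}^m μ_{k−j} c_k = 0 for j = 0, …, m−1, so that ∫ g(y−θ)ψ_m(y) dy = θ^m for all θ. If Y_1, …, Y_n are i.i.d. with density q(y) = ∫ g(y−θ) f(θ) dθ, then the estimator Φ̂_m = n⁻¹ Σ_{l=1}^n ψ_m(Y_l) satisfies E Φ̂_m = Φ_m, where Φ_m = ∫ θ^m f(θ) dθ, and Var(Φ̂_m) ≤ C_m n⁻¹, where C_m < ∞ is a constant depending only on m and on the moments μ_k, ν_k for k ≤ 2m. -/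
/-!
Write `q = g ∗ f` for the density of `Y` and `Q = q dy` for its law. Fubini turns `∫ h q` into
`∫ (∫ h(y) g(y - θ) dy) f(θ) dθ` whenever `|h(y)| ≲ 1 + y^{2m}`, because
`1 + (ξ + θ)^{2m} ≲ (1 + ξ^{2m})(1 + θ^{2m})` and both factors are integrable against `g` and `f`.
Taking `h = ψ_m` gives `E ψ_m(Y) = Φ_m`, and `h = ψ_m²` (a polynomial of degree `2m`) shows that
`ψ_m ∈ L²(Q)`. Since `∏ q(y_i) dy` is the product measure `Q^{⊗n}`, the estimator is the sample
mean of `n` independent copies of `ψ_m(Y)`, so it is unbiased with variance `Var_Q(ψ_m) / n`.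
-/

open MeasureTheory Finset ProbabilityTheory

theorem one_add_add_pow_le (m : ℕ) (u v : ℝ) :
    1 + (u + v) ^ (2 * m) ≤ 2 ^ (2 * m) * ((1 + u ^ (2 * m)) * (1 + v ^ (2 * m))) := by
  have hev : Even (2 * m) := even_two_mul m
  have hsum : (u + v) ^ (2 * m) ≤ 2 ^ (2 * m) * (u ^ (2 * m) + v ^ (2 * m)) :=
    calc (u + v) ^ (2 * m) = |u + v| ^ (2 * m) := (hev.pow_abs _).symm
      _ ≤ (|u| + |v|) ^ (2 * m) := pow_le_pow_left₀ (abs_nonneg _) (abs_add_le u v) _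
      _ ≤ 2 ^ (2 * m - 1) * (|u| ^ (2 * m) + |v| ^ (2 * m)) :=
        add_pow_le (abs_nonneg u) (abs_nonneg v) _
      _ ≤ 2 ^ (2 * m) * (u ^ (2 * m) + v ^ (2 * m)) := by
        rw [hev.pow_abs, hev.pow_abs]
        have := hev.pow_nonneg u
        have := hev.pow_nonneg v
        gcongr
        · norm_num
        · omega
  have hu := hev.pow_nonneg u
  have hv := hev.pow_nonneg v
  have h1 : (1 : ℝ) ≤ 2 ^ (2 * m) := one_le_pow₀ (by norm_num)
  nlinarith [mul_nonneg hu hv]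

theorem sq_one_add_abs_pow_le (m : ℕ) (t : ℝ) : (1 + |t| ^ m) ^ 2 ≤ 2 * (1 + t ^ (2 * m)) := by
  have hsq : (|t| ^ m) ^ 2 = t ^ (2 * m) := by
    rw [← pow_mul, mul_comm m 2, (even_two_mul m).pow_abs]
  nlinarith [sq_nonneg (|t| ^ m - 1)]

theorem abs_sum_mul_pow_le (m : ℕ) (c : ℕ → ℝ) (t : ℝ) :
    |∑ k ∈ range (m + 1), c k * t ^ k| ≤ (∑ k ∈ range (m + 1), |c k|) * (1 + |t| ^ m) := by
  rw [sum_mul]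
  refine (abs_sum_le_sum_abs _ _).trans (sum_le_sum fun k hk => ?_)
  rw [abs_mul, abs_pow]
  refine mul_le_mul_of_nonneg_left ?_ (abs_nonneg _)
  rcases le_total |t| 1 with ht | ht
  · linarith [pow_le_one₀ (abs_nonneg t) ht (n := k), pow_nonneg (abs_nonneg t) m]
  · linarith [pow_le_pow_right₀ ht (Nat.lt_succ_iff.mp (mem_range.mp hk))]

section Density

variable {α : Type*} [MeasurableSpace α] {μ : Measure α} {q : α → ℝ}

theorem integral_withDensity_ofReal (hq0 : ∀ x, 0 ≤ q x) (hq : AEMeasurable q μ) (F : α → ℝ) :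
    ∫ x, F x ∂μ.withDensity (fun x => ENNReal.ofReal (q x)) = ∫ x, F x * q x ∂μ := by
  rw [integral_withDensity_eq_integral_toReal_smul₀ hq.ennreal_ofReal
    (ae_of_all _ fun _ => ENNReal.ofReal_lt_top)]
  simp only [ENNReal.toReal_ofReal (hq0 _), smul_eq_mul, mul_comm]

theorem integrable_withDensity_ofReal_iff (hq0 : ∀ x, 0 ≤ q x) (hq : AEMeasurable q μ)
    {F : α → ℝ} :
    Integrable F (μ.withDensity fun x => ENNReal.ofReal (q x)) ↔
      Integrable (fun x => F x * q x) μ := by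
  rw [integrable_withDensity_iff_integrable_smul₀' hq.ennreal_ofReal
    (ae_of_all _ fun _ => ENNReal.ofReal_lt_top)]
  simp only [ENNReal.toReal_ofReal (hq0 _), smul_eq_mul, mul_comm]

theorem isProbabilityMeasure_withDensity_ofReal (hq0 : ∀ x, 0 ≤ q x) (hq : Integrable q μ)
    (hq1 : ∫ x, q x ∂μ = 1) :
    IsProbabilityMeasure (μ.withDensity fun x => ENNReal.ofReal (q x)) := by
  constructor
  rw [withDensity_apply _ MeasurableSet.univ, Measure.restrict_univ,
    ← ofReal_integral_eq_lintegral_ofReal hq (ae_of_all _ hq0), hq1, ENNReal.ofReal_one]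

end Density

section ProductDensity

variable {α ι : Type*} [MeasurableSpace α] [Fintype ι] {μ : Measure α} [SigmaFinite μ]
  {q : α → ℝ}

theorem Measure.pi_withDensity_ofReal (hq0 : ∀ x, 0 ≤ q x) (hq : Integrable q μ) :
    Measure.pi (fun _ : ι => μ.withDensity fun x => ENNReal.ofReal (q x)) =
      (Measure.pi fun _ : ι => μ).withDensity fun y => ENNReal.ofReal (∏ i, q (y i)) := by
  have : IsFiniteMeasure (μ.withDensity fun x => ENNReal.ofReal (q x)) :=
    isFiniteMeasure_withDensity_ofReal hq.hasFiniteIntegral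
  refine Measure.pi_eq fun s hs => ?_
  have hind : ∀ y : ι → α, (Set.univ.pi s).indicator (fun y => ENNReal.ofReal (∏ i, q (y i))) y =
      ENNReal.ofReal (∏ i, (s i).indicator q (y i)) := by
    intro y
    by_cases hy : y ∈ Set.univ.pi s
    · rw [Set.indicator_of_mem hy]
      congr 1
      exact prod_congr rfl fun i _ => (Set.indicator_of_mem (hy i trivial) q).symm
    · rw [Set.indicator_of_notMem hy]
      obtain ⟨i, hi⟩ : ∃ i, y i ∉ s i := by simpa [Set.mem_univ_pi] using hy
      rw [prod_eq_zero (mem_univ i) (Set.indicator_of_notMem hi q),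
        ENNReal.ofReal_zero]
  have hint : ∀ i, Integrable ((s i).indicator q) μ := fun i => hq.indicator (hs i)
  have hint0 : ∀ i, 0 ≤ (s i).indicator q := fun i => Set.indicator_nonneg fun x _ => hq0 x
  rw [withDensity_apply _ (MeasurableSet.univ_pi hs),
    ← lintegral_indicator (MeasurableSet.univ_pi hs)]
  simp_rw [hind]
  rw [← ofReal_integral_eq_lintegral_ofReal (Integrable.fintype_prod hint)
      (ae_of_all _ fun y => prod_nonneg fun i _ => hint0 i _),
    integral_fintype_prod_eq_prod,
    ENNReal.ofReal_prod_of_nonneg fun i _ => integral_nonneg (hint0 i)]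
  refine prod_congr rfl fun i _ => ?_
  rw [withDensity_apply _ (hs i), ofReal_integral_eq_lintegral_ofReal (hint i)
      (ae_of_all _ (hint0 i)), ← lintegral_indicator (hs i)]
  congr 1 with x
  by_cases hx : x ∈ s i <;> simp [hx]

theorem integral_pi_withDensity_ofReal (hq0 : ∀ x, 0 ≤ q x) (hq : Integrable q μ)
    (F : (ι → α) → ℝ) :
    ∫ y, F y ∂Measure.pi (fun _ => μ.withDensity fun x => ENNReal.ofReal (q x)) =
      ∫ y, F y * ∏ i, q (y i) ∂Measure.pi fun _ => μ := by
  rw [Measure.pi_withDensity_ofReal hq0 hq, integral_withDensity_ofReal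
    (fun y => prod_nonneg fun i _ => hq0 (y i)) (Integrable.fintype_prod fun _ => hq).aemeasurable]

theorem lintegral_pi_withDensity_ofReal (hq0 : ∀ x, 0 ≤ q x) (hq : Integrable q μ)
    (F : (ι → α) → ℝ) :
    ∫⁻ y, ENNReal.ofReal (F y)
        ∂Measure.pi (fun _ => μ.withDensity fun x => ENNReal.ofReal (q x)) =
      ∫⁻ y, ENNReal.ofReal (F y * ∏ i, q (y i)) ∂Measure.pi fun _ => μ := by
  rw [Measure.pi_withDensity_ofReal hq0 hq, lintegral_withDensity_eq_lintegral_mul_non_measurable₀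
    _ (Integrable.fintype_prod fun _ => hq).aemeasurable.ennreal_ofReal
    (ae_of_all _ fun _ => ENNReal.ofReal_lt_top)]
  refine lintegral_congr fun y => ?_
  rw [Pi.mul_apply, ← ENNReal.ofReal_mul (prod_nonneg fun i _ => hq0 _), mul_comm]

end ProductDensity

section SampleMean

variable {α : Type*} [MeasurableSpace α] {P : Measure α} [IsProbabilityMeasure P]

noncomputable def sampleMean (n : ℕ) (ψ : α → ℝ) (y : Fin n → α) : ℝ := (n : ℝ)⁻¹ * ∑ l, ψ (y l)

theorem integral_sampleMean {n : ℕ} (hn : 0 < n) {ψ : α → ℝ} (hψ : Integrable ψ P) :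
    ∫ y, sampleMean n ψ y ∂Measure.pi (fun _ => P) = ∫ x, ψ x ∂P := by
  simp only [sampleMean]
  rw [integral_const_mul, integral_finsetSum _ fun l _ => integrable_comp_eval hψ]
  simp only [integral_comp_eval (μ := fun _ => P) hψ.aestronglyMeasurable, sum_const, card_univ,
    Fintype.card_fin, nsmul_eq_mul]
  field_simp

theorem variance_sampleMean (n : ℕ) {ψ : α → ℝ} (hψ : MemLp ψ 2 P) :
    Var[sampleMean n ψ; Measure.pi fun _ => P] = Var[ψ; P] / n := by
  have hsum := variance_sum_pi (μ := fun _ : Fin n => P) (X := fun _ => ψ) fun _ => hψ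
  simp only [sum_const, card_univ, Fintype.card_fin, nsmul_eq_mul] at hsum
  have hmean : sampleMean n ψ =
      fun y => (n : ℝ)⁻¹ * (∑ l : Fin n, fun y : Fin n → α => ψ (y l)) y := by
    ext y; simp only [sampleMean, Finset.sum_apply]
  rw [hmean, variance_const_mul, hsum]
  rcases n.eq_zero_or_pos with rfl | hn
  · simp
  · field_simp

theorem lintegral_sq_sampleMean_sub {n : ℕ} (hn : 0 < n) {ψ : α → ℝ} (hψ : MemLp ψ 2 P) :
    ∫⁻ y, ENNReal.ofReal ((sampleMean n ψ y - ∫ x, ψ x ∂P) ^ 2) ∂Measure.pi (fun _ => P) =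
      ENNReal.ofReal (Var[ψ; P] / n) := by
  have hmem : MemLp (sampleMean n ψ) 2 (Measure.pi fun _ => P) := by
    unfold sampleMean
    exact (memLp_finsetSum univ fun l _ => hψ.comp_measurePreserving
      (measurePreserving_eval (fun _ => P) l)).const_mul _
  rw [← variance_sampleMean n hψ, hmem.ofReal_variance_eq, evariance_eq_lintegral_ofReal,
    integral_sampleMean hn (hψ.integrable one_le_two)]

end SampleMean
noncomputable def convDensity (g f : ℝ → ℝ) (y : ℝ) : ℝ := ∫ θ, g (y - θ) * f θ

noncomputable def convLaw (g f : ℝ → ℝ) : Measure ℝ :=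
  volume.withDensity fun y => ENNReal.ofReal (convDensity g f y)

theorem convDensity_nonneg {g f : ℝ → ℝ} (hg0 : ∀ x, 0 ≤ g x) (hf0 : ∀ x, 0 ≤ f x) (y : ℝ) :
    0 ≤ convDensity g f y :=
  integral_nonneg fun θ => mul_nonneg (hg0 (y - θ)) (hf0 θ)

section Convolution

variable {g f : ℝ → ℝ} {m : ℕ}
  (hg0 : ∀ x, 0 ≤ g x) (hg : Integrable g) (hf0 : ∀ x, 0 ≤ f x) (hf : Integrable f)
  (hμ : Integrable fun θ : ℝ => θ ^ (2 * m) * g θ)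
  (hν : Integrable fun θ : ℝ => θ ^ (2 * m) * f θ)
include hg0 hg hf0 hf hμ hν

theorem integrable_mul_conv_integrand {h : ℝ → ℝ} (hh : AEStronglyMeasurable h) {K : ℝ}
    (hhK : ∀ y, |h y| ≤ K * (1 + y ^ (2 * m))) :
    Integrable (fun p : ℝ × ℝ => h p.1 * (g (p.1 - p.2) * f p.2)) (volume.prod volume) := by
  have hK : 0 ≤ K := by
    have := (abs_nonneg _).trans (hhK 0)
    nlinarith [(even_two_mul m).pow_nonneg (0 : ℝ)]
  have hweight : ∀ φ : ℝ → ℝ, Integrable φ → Integrable (fun θ : ℝ => θ ^ (2 * m) * φ θ) →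
      Integrable fun θ : ℝ => (1 + θ ^ (2 * m)) * φ θ := fun φ h1 h2 =>
    (h1.add h2).congr (ae_of_all _ fun θ => by simp only [Pi.add_apply]; ring)
  have hdom := (hweight f hf hν).convolution_integrand (ContinuousLinearMap.mul ℝ ℝ)
    (hweight g hg hμ)
  have hconv := hf.aestronglyMeasurable.convolution_integrand (ContinuousLinearMap.mul ℝ ℝ)
    hg.aestronglyMeasurable
  simp only [ContinuousLinearMap.mul_apply'] at hdom hconv
  refine (hdom.const_mul (K * 2 ^ (2 * m))).mono' ?_ (ae_of_all _ fun p => ?_)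
  · exact (hh.comp_fst.mul hconv).congr (ae_of_all _ fun p => by simp only [Pi.mul_apply]; ring)
  · have hgf := mul_nonneg (hg0 (p.1 - p.2)) (hf0 p.2)
    have hw := one_add_add_pow_le m (p.1 - p.2) p.2
    rw [sub_add_cancel] at hw
    rw [Real.norm_eq_abs, abs_mul, abs_of_nonneg hgf]
    calc |h p.1| * (g (p.1 - p.2) * f p.2)
        ≤ K * (1 + p.1 ^ (2 * m)) * (g (p.1 - p.2) * f p.2) := by gcongr; exact hhK p.1
      _ ≤ K * (2 ^ (2 * m) * ((1 + (p.1 - p.2) ^ (2 * m)) * (1 + p.2 ^ (2 * m)))) *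
            (g (p.1 - p.2) * f p.2) := by gcongr
      _ = _ := by ring

theorem integrable_mul_convDensity {h : ℝ → ℝ} (hh : AEStronglyMeasurable h) {K : ℝ}
    (hhK : ∀ y, |h y| ≤ K * (1 + y ^ (2 * m))) :
    Integrable fun y => h y * convDensity g f y :=
  (integrable_mul_conv_integrand hg0 hg hf0 hf hμ hν hh hhK).integral_prod_left.congr
    (ae_of_all _ fun y => integral_const_mul (h y) _)

theorem integral_mul_convDensity {h : ℝ → ℝ} (hh : AEStronglyMeasurable h) {K : ℝ}
    (hhK : ∀ y, |h y| ≤ K * (1 + y ^ (2 * m))) :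
    ∫ y, h y * convDensity g f y = ∫ θ, (∫ y, h y * g (y - θ)) * f θ :=
  calc ∫ y, h y * convDensity g f y = ∫ y, ∫ θ, h y * (g (y - θ) * f θ) := by
        simp only [convDensity, integral_const_mul]
    _ = ∫ θ, ∫ y, h y * (g (y - θ) * f θ) :=
        integral_integral_swap (integrable_mul_conv_integrand hg0 hg hf0 hf hμ hν hh hhK)
    _ = ∫ θ, (∫ y, h y * g (y - θ)) * f θ := by
        simp only [← integral_mul_const, mul_assoc]

theorem integrable_convDensity : Integrable (convDensity g f) := by
  have := integrable_mul_convDensity hg0 hg hf0 hf hμ hν aestronglyMeasurable_const (K := 1)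
    fun y => by
      rw [abs_one, one_mul]; exact le_add_of_nonneg_right ((even_two_mul m).pow_nonneg y)
  simpa only [one_mul] using this

theorem integral_convDensity (hg1 : ∫ x, g x = 1) : ∫ y, convDensity g f y = ∫ θ, f θ := by
  have := integral_mul_convDensity hg0 hg hf0 hf hμ hν aestronglyMeasurable_const (K := 1)
    fun y => by
      rw [abs_one, one_mul]; exact le_add_of_nonneg_right ((even_two_mul m).pow_nonneg y)
  simpa only [one_mul, integral_sub_right_eq_self, hg1] using this

theorem isProbabilityMeasure_convLaw (hg1 : ∫ x, g x = 1) (hf1 : ∫ x, f x = 1) :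
    IsProbabilityMeasure (convLaw g f) :=
  isProbabilityMeasure_withDensity_ofReal (convDensity_nonneg hg0 hf0)
    (integrable_convDensity hg0 hg hf0 hf hμ hν)
    (by rw [integral_convDensity hg0 hg hf0 hf hμ hν hg1, hf1])

theorem memLp_two_convLaw {ψ : ℝ → ℝ} (hψ : Continuous ψ) {A : ℝ}
    (hψA : ∀ t, |ψ t| ≤ A * (1 + |t| ^ m)) : MemLp ψ 2 (convLaw g f) := by
  refine (memLp_two_iff_integrable_sq hψ.aestronglyMeasurable).2
    ((integrable_withDensity_ofReal_iff (convDensity_nonneg hg0 hf0)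
      (integrable_convDensity hg0 hg hf0 hf hμ hν).aemeasurable).2
    (integrable_mul_convDensity hg0 hg hf0 hf hμ hν (hψ.pow 2).aestronglyMeasurable
      (K := 2 * A ^ 2) fun t => ?_))
  calc |ψ t ^ 2| ≤ (A * (1 + |t| ^ m)) ^ 2 := by
        rw [abs_pow]; exact pow_le_pow_left₀ (abs_nonneg _) (hψA t) 2
    _ ≤ A ^ 2 * (2 * (1 + t ^ (2 * m))) := by
        rw [mul_pow]; gcongr; exact sq_one_add_abs_pow_le m t
    _ = 2 * A ^ 2 * (1 + t ^ (2 * m)) := by ring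

theorem integral_convLaw {ψ : ℝ → ℝ} (hψ : Continuous ψ) {A : ℝ}
    (hψA : ∀ t, |ψ t| ≤ A * (1 + |t| ^ m)) :
    ∫ y, ψ y ∂convLaw g f = ∫ θ, (∫ y, ψ y * g (y - θ)) * f θ := by
  have hA : 0 ≤ A :=
    (mul_nonneg_iff_of_pos_right (by positivity)).mp ((abs_nonneg _).trans (hψA 0))
  rw [convLaw, integral_withDensity_ofReal (convDensity_nonneg hg0 hf0)
      (integrable_convDensity hg0 hg hf0 hf hμ hν).aemeasurable,
    integral_mul_convDensity hg0 hg hf0 hf hμ hν hψ.aestronglyMeasurable (K := 2 * A) fun t => ?_]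
  calc |ψ t| ≤ A * (1 + |t| ^ m) := hψA t
    _ ≤ A * (1 + |t| ^ m) ^ 2 := by
        gcongr; nlinarith [pow_nonneg (abs_nonneg t) m]
    _ ≤ A * (2 * (1 + t ^ (2 * m))) := by gcongr; exact sq_one_add_abs_pow_le m t
    _ = 2 * A * (1 + t ^ (2 * m)) := by ring

end Convolution

theorem stmt_1_general (m : ℕ) (g f : ℝ → ℝ)
    (hg_nonneg : ∀ x, 0 ≤ g x) (hg_int : Integrable g) (hg_one : (∫ x, g x) = 1)
    (hf_nonneg : ∀ x, 0 ≤ f x) (hf_int : Integrable f) (hf_one : (∫ x, f x) = 1)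
    (hμ : Integrable (fun θ : ℝ => θ ^ (2 * m) * g θ))
    (hν : Integrable (fun θ : ℝ => θ ^ (2 * m) * f θ))
    (c : ℕ → ℝ)
    (hψ : ∀ θ : ℝ,
      (∫ y : ℝ, g (y - θ) * ∑ k ∈ Finset.range (m + 1), c k * y ^ k) = θ ^ m) :
    (∀ n : ℕ, 0 < n →
      (∫ y : Fin n → ℝ,
        ((n : ℝ)⁻¹ * ∑ l : Fin n, ∑ k ∈ Finset.range (m + 1), c k * (y l) ^ k) *
          ∏ i : Fin n, (∫ θ : ℝ, g (y i - θ) * f θ))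
        = ∫ θ : ℝ, θ ^ m * f θ) ∧
    ∃ C : ℝ, 0 ≤ C ∧ ∀ n : ℕ, 0 < n →
      (∫⁻ y : Fin n → ℝ,
        ENNReal.ofReal
          ((((n : ℝ)⁻¹ * ∑ l : Fin n, ∑ k ∈ Finset.range (m + 1), c k * (y l) ^ k)
              - ∫ θ : ℝ, θ ^ m * f θ) ^ 2 *
            ∏ i : Fin n, (∫ θ : ℝ, g (y i - θ) * f θ)))
        ≤ ENNReal.ofReal (C / n) := by
  set ψ : ℝ → ℝ := fun t => ∑ k ∈ range (m + 1), c k * t ^ k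
  have hψ_cont : Continuous ψ := by fun_prop
  have hψ_growth : ∀ t, |ψ t| ≤ (∑ k ∈ range (m + 1), |c k|) * (1 + |t| ^ m) :=
    abs_sum_mul_pow_le m c
  have hq0 := convDensity_nonneg hg_nonneg hf_nonneg
  have hq := integrable_convDensity hg_nonneg hg_int hf_nonneg hf_int hμ hν
  have := isProbabilityMeasure_convLaw hg_nonneg hg_int hf_nonneg hf_int hμ hν hg_one hf_one
  have hψ_L2 := memLp_two_convLaw hg_nonneg hg_int hf_nonneg hf_int hμ hν hψ_cont hψ_growth
  have hΦ : ∫ y, ψ y ∂convLaw g f = ∫ θ, θ ^ m * f θ := by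
    rw [integral_convLaw hg_nonneg hg_int hf_nonneg hf_int hμ hν hψ_cont hψ_growth]
    have hψ' : ∀ θ, ∫ y, ψ y * g (y - θ) = θ ^ m := fun θ =>
      (integral_congr_ae (ae_of_all _ fun y => mul_comm _ _)).trans (hψ θ)
    simp only [hψ']
  refine ⟨fun n hn => ?_, Var[ψ; convLaw g f], variance_nonneg _ _, fun n hn => le_of_eq ?_⟩
  · rw [← hΦ, ← integral_sampleMean hn (hψ_L2.integrable one_le_two), convLaw,
      integral_pi_withDensity_ofReal hq0 hq]
    rfl
  · rw [← hΦ, ← lintegral_sq_sampleMean_sub hn hψ_L2, convLaw,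
      lintegral_pi_withDensity_ofReal hq0 hq]
    rfl

theorem stmt_1 (m : ℕ) (hm : 0 < m) (g f : ℝ → ℝ)
    (hg_nonneg : ∀ x, 0 ≤ g x) (hg_int : Integrable g) (hg_one : (∫ x, g x) = 1)
    (hf_nonneg : ∀ x, 0 ≤ f x) (hf_int : Integrable f) (hf_one : (∫ x, f x) = 1)
    (hμ : Integrable (fun θ : ℝ => θ ^ (2 * m) * g θ))
    (hν : Integrable (fun θ : ℝ => θ ^ (2 * m) * f θ))
    (c : ℕ → ℝ) (hcm : c m = 1)
    (hsys : ∀ j < m, (∑ k ∈ Finset.Icc j m, (∫ θ : ℝ, θ ^ (k - j) * g θ) * c k) = 0)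
    (hψ : ∀ θ : ℝ,
      (∫ y : ℝ, g (y - θ) * ∑ k ∈ Finset.range (m + 1), c k * y ^ k) = θ ^ m) :
    (∀ n : ℕ, 0 < n →
      (∫ y : Fin n → ℝ,
        ((n : ℝ)⁻¹ * ∑ l : Fin n, ∑ k ∈ Finset.range (m + 1), c k * (y l) ^ k) *
          ∏ i : Fin n, (∫ θ : ℝ, g (y i - θ) * f θ))
        = ∫ θ : ℝ, θ ^ m * f θ) ∧
    ∃ C : ℝ, 0 ≤ C ∧ ∀ n : ℕ, 0 < n →
      (∫⁻ y : Fin n → ℝ,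
        ENNReal.ofReal
          ((((n : ℝ)⁻¹ * ∑ l : Fin n, ∑ k ∈ Finset.range (m + 1), c k * (y l) ^ k)
              - ∫ θ : ℝ, θ ^ m * f θ) ^ 2 *
            ∏ i : Fin n, (∫ θ : ℝ, g (y i - θ) * f θ)))
        ≤ ENNReal.ofReal (C / n) :=
  stmt_1_general m g f hg_nonneg hg_int hg_one hf_nonneg hf_int hf_one hμ hν c hψ
end

section
/- Let A_1 > 0, A_2 ∈ ℝ, β > 0, γ > 0, and for n ∈ ℕ and h > 0 define H(n,h) = h^{2A_1} + n⁻¹ ∫_0^{1/h} (ω²+1)^{A_2} exp(2γω^β) dω. Then there exist constants 0 < c ≤ C < ∞ and N such that for all n ≥ N: c · (log n)^{−2A_1/β} ≤ inf_{h>0} H(n,h) ≤ C · (log n)^{−2A_1/β}. -/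
open MeasureTheory

/-- The bias–variance tradeoff function `H(n,h)` in the case `b = d = 0`, `β > 0`, `γ > 0`. -/
noncomputable def H5 (A₁ A₂ β γ : ℝ) (n : ℕ) (h : ℝ) : ℝ :=
  h ^ (2 * A₁) +
    (n : ℝ)⁻¹ * ∫ ω in Set.Ioc (0 : ℝ) (1 / h), (ω ^ 2 + 1) ^ A₂ * Real.exp (2 * γ * ω ^ β)

/-! Write `L = log n`. The bias `h ^ (2A₁)` increases and the variance term decreases in `h`,
so `H5 n h` is at least the smaller of the two evaluated at any fixed `h₀`. The integrand is
`exp (2γω^β)` up to a factor polynomial in `ω`, so at the frequency `ρ = (L/γ)^(1/β)` it is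
about `n²`: with `1/h₀ = 2ρ` the variance is at least `1`, while the bias is a constant multiple
of `L^(-2A₁/β)`. For the upper bound take `1/h = (L/(4γ))^(1/β)`, where the integrand is at most
`√n` times a power of `L`; the variance is then `O(n^(-1/2) · poly L) = o(L^(-2A₁/β))`, and the
bias is again a constant multiple of `L^(-2A₁/β)`. -/

open Filter Real Set

noncomputable def weight (A₂ β γ ω : ℝ) : ℝ := (ω ^ 2 + 1) ^ A₂ * exp (2 * γ * ω ^ β)

noncomputable def cutoff (β γ s : ℝ) : ℝ := (s / γ) ^ β⁻¹

lemma H5_eq (A₁ A₂ β γ : ℝ) (n : ℕ) (h : ℝ) :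
    H5 A₁ A₂ β γ n h = h ^ (2 * A₁) + (n : ℝ)⁻¹ * ∫ ω in Ioc 0 (1 / h), weight A₂ β γ ω :=
  rfl

lemma rpow_le_rpow_abs {x y : ℝ} (a : ℝ) (hx : 1 ≤ x) (hxy : x ≤ y) : x ^ a ≤ y ^ |a| :=
  (rpow_le_rpow_of_exponent_le hx (le_abs_self a)).trans
    (rpow_le_rpow (by linarith) hxy (abs_nonneg a))

lemma inv_rpow_abs_le_rpow {x y : ℝ} (a : ℝ) (hx : 1 ≤ x) (hxy : x ≤ y) :
    (y ^ |a|)⁻¹ ≤ x ^ a := by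
  rw [inv_le_comm₀ (rpow_pos_of_pos (by linarith) _) (rpow_pos_of_pos (by linarith) _),
    ← rpow_neg (by linarith), ← abs_neg]
  exact rpow_le_rpow_abs (-a) hx hxy

lemma eventually_mul_rpow_le_exp (k s : ℝ) {b : ℝ} (hb : 0 < b) :
    ∀ᶠ x in atTop, k * x ^ s ≤ exp (b * x) := by
  filter_upwards [((isLittleO_rpow_exp_pos_mul_atTop s hb).const_mul_left k).bound one_pos]
    with x hx
  rw [one_mul, norm_of_nonneg (exp_pos _).le] at hx
  exact (le_norm_self _).trans hx

section

variable {A₁ A₂ β γ : ℝ}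

lemma continuous_weight (hβ : 0 ≤ β) : Continuous (weight A₂ β γ) := by
  have hpow : Continuous fun ω : ℝ => ω ^ β :=
    continuous_iff_continuousAt.2 fun ω => continuousAt_rpow_const ω β (Or.inr hβ)
  have hbase : Continuous fun ω : ℝ => (ω ^ 2 + 1) ^ A₂ :=
    (by fun_prop : Continuous fun ω : ℝ => ω ^ 2 + 1).rpow_const fun ω => Or.inl (by positivity)
  exact hbase.mul (continuous_exp.comp (continuous_const.mul hpow))

lemma weight_nonneg (ω : ℝ) : 0 ≤ weight A₂ β γ ω := by
  unfold weight; positivity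

lemma weight_le (hβ : 0 ≤ β) (hγ : 0 ≤ γ) {ω t : ℝ} (hω : 0 ≤ ω) (hωt : ω ≤ t) :
    weight A₂ β γ ω ≤ (t ^ 2 + 1) ^ |A₂| * exp (2 * γ * t ^ β) := by
  unfold weight
  gcongr
  exact rpow_le_rpow_abs A₂ (by nlinarith) (by nlinarith)

lemma le_weight (hβ : 0 ≤ β) (hγ : 0 ≤ γ) {s ω t : ℝ} (hs : 0 ≤ s) (hsω : s ≤ ω)
    (hωt : ω ≤ t) :
    ((t ^ 2 + 1) ^ |A₂|)⁻¹ * exp (2 * γ * s ^ β) ≤ weight A₂ β γ ω := by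
  unfold weight
  gcongr
  exact inv_rpow_abs_le_rpow A₂ (by nlinarith) (by nlinarith)

lemma setIntegral_weight_le (hβ : 0 ≤ β) (hγ : 0 ≤ γ) {t : ℝ} (ht : 0 ≤ t) :
    ∫ ω in Ioc 0 t, weight A₂ β γ ω ≤ (t ^ 2 + 1) ^ (|A₂| + 1) * exp (2 * γ * t ^ β) := by
  calc ∫ ω in Ioc 0 t, weight A₂ β γ ω
      ≤ ‖∫ ω in Ioc 0 t, weight A₂ β γ ω‖ := le_norm_self _
    _ ≤ (t ^ 2 + 1) ^ |A₂| * exp (2 * γ * t ^ β) * volume.real (Ioc 0 t) :=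
        norm_setIntegral_le_of_norm_le_const measure_Ioc_lt_top fun ω hω => by
          rw [norm_of_nonneg (weight_nonneg ω)]
          exact weight_le hβ hγ hω.1.le hω.2
    _ ≤ (t ^ 2 + 1) ^ |A₂| * exp (2 * γ * t ^ β) * (t ^ 2 + 1) := by
        rw [volume_real_Ioc_of_le ht, sub_zero]
        gcongr
        nlinarith
    _ = (t ^ 2 + 1) ^ (|A₂| + 1) * exp (2 * γ * t ^ β) := by
        rw [rpow_add_one (by positivity)]
        ring

lemma le_setIntegral_weight (hβ : 0 ≤ β) (hγ : 0 ≤ γ) {s t : ℝ} (hs : 0 ≤ s) (hst : s ≤ t) :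
    (t - s) * (((t ^ 2 + 1) ^ |A₂|)⁻¹ * exp (2 * γ * s ^ β)) ≤
      ∫ ω in Ioc 0 t, weight A₂ β γ ω := by
  calc (t - s) * (((t ^ 2 + 1) ^ |A₂|)⁻¹ * exp (2 * γ * s ^ β))
      = volume.real (Ioc s t) • (((t ^ 2 + 1) ^ |A₂|)⁻¹ * exp (2 * γ * s ^ β)) := by
        rw [volume_real_Ioc_of_le hst, smul_eq_mul]
    _ ≤ ∫ ω in Ioc s t, weight A₂ β γ ω :=
        setIntegral_ge_of_const_le measurableSet_Ioc measure_Ioc_lt_top.ne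
          (fun ω hω => le_weight hβ hγ hs hω.1.le hω.2) (continuous_weight hβ).integrableOn_Ioc
    _ ≤ ∫ ω in Ioc 0 t, weight A₂ β γ ω :=
        setIntegral_mono_set (continuous_weight hβ).integrableOn_Ioc
          (ae_of_all _ weight_nonneg) (Ioc_subset_Ioc_left hs).eventuallyLE

lemma min_le_H5 (hA₁ : 0 ≤ A₁) (hβ : 0 ≤ β) (n : ℕ) {t h : ℝ} (ht : 0 < t) (hh : 0 < h) :
    min ((1 / t) ^ (2 * A₁)) ((n : ℝ)⁻¹ * ∫ ω in Ioc 0 t, weight A₂ β γ ω) ≤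
      H5 A₁ A₂ β γ n h := by
  rw [H5_eq]
  rcases le_total (1 / t) h with hle | hle
  · refine (min_le_left _ _).trans (le_add_of_le_of_nonneg ?_ ?_)
    · exact rpow_le_rpow (by positivity) hle (by positivity)
    · exact mul_nonneg (by positivity)
        (setIntegral_nonneg measurableSet_Ioc fun ω _ => weight_nonneg ω)
  · refine (min_le_right _ _).trans (le_add_of_nonneg_of_le (by positivity) ?_)
    have htle : t ≤ 1 / h := (le_one_div hh ht).1 hle
    gcongr
    · exact ae_of_all _ weight_nonneg
    · exact (continuous_weight hβ).integrableOn_Ioc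

lemma mul_cutoff_rpow {s : ℝ} (hβ : β ≠ 0) (hγ : 0 < γ) (hs : 0 ≤ s) :
    γ * cutoff β γ s ^ β = s := by
  rw [cutoff, rpow_inv_rpow (div_nonneg hs hγ.le) hβ]
  field_simp

lemma cutoff_rpow {s : ℝ} (hγ : 0 < γ) (hs : 0 ≤ s) (x : ℝ) :
    cutoff β γ s ^ x = s ^ (x / β) / γ ^ (x / β) := by
  rw [cutoff, ← rpow_mul (div_nonneg hs hγ.le), div_rpow hs hγ.le, inv_mul_eq_div]

lemma one_le_cutoff {s : ℝ} (hβ : 0 < β) (hγ : 0 < γ) (hs : γ ≤ s) : 1 ≤ cutoff β γ s :=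
  one_le_rpow ((one_le_div hγ).2 hs) (inv_nonneg.2 hβ.le)

lemma eventually_mul_rpow_mul_cutoff_le_exp (hβ : 0 < β) (hγ : 0 < γ) {k : ℝ}
    (hk : 0 ≤ k) (s : ℝ) {q : ℝ} (hq : 0 ≤ q) {b : ℝ} (hb : 0 < b) :
    ∀ᶠ L in atTop, k * L ^ s * (cutoff β γ L ^ 2 + 1) ^ q ≤ exp (b * L) := by
  filter_upwards [eventually_mul_rpow_le_exp (k * 2 ^ q / γ ^ (2 * q / β)) (s + 2 * q / β) hb,
    eventually_ge_atTop γ] with L hexp hγL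
  have hL : 0 < L := hγ.trans_le hγL
  have hρ := one_le_cutoff hβ hγ hγL
  calc k * L ^ s * (cutoff β γ L ^ 2 + 1) ^ q
      ≤ k * L ^ s * (2 * cutoff β γ L ^ (2 : ℝ)) ^ q := by
        rw [rpow_two]
        gcongr
        nlinarith
    _ = k * 2 ^ q / γ ^ (2 * q / β) * L ^ (s + 2 * q / β) := by
        rw [mul_rpow (by norm_num) (by positivity), ← rpow_mul (by positivity),
          cutoff_rpow hγ hL.le, rpow_add hL]
        ring
    _ ≤ exp (b * L) := hexp

lemma one_le_inv_mul_setIntegral_weight (hβ : 0 < β) (hγ : 0 < γ) {n : ℕ} (hn : 0 < n)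
    (hγL : γ ≤ log n) (hpoly : 4 ^ |A₂| * (cutoff β γ (log n) ^ 2 + 1) ^ |A₂| ≤ n) :
    1 ≤ (n : ℝ)⁻¹ * ∫ ω in Ioc 0 (2 * cutoff β γ (log n)), weight A₂ β γ ω := by
  set ρ := cutoff β γ (log n)
  have hρ : 1 ≤ ρ := one_le_cutoff hβ hγ hγL
  have hn2 : exp (2 * γ * ρ ^ β) = n * n := by
    rw [mul_assoc, mul_cutoff_rpow hβ.ne' hγ (by linarith), two_mul, exp_add,
      exp_log (by exact_mod_cast hn)]
  have hX : ((2 * ρ) ^ 2 + 1) ^ |A₂| ≤ n := by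
    refine le_trans ?_ hpoly
    rw [← mul_rpow (by norm_num) (by positivity)]
    gcongr
    nlinarith
  have hlow := le_setIntegral_weight (A₂ := A₂) hβ.le hγ.le (by linarith : 0 ≤ ρ)
    (by linarith : ρ ≤ 2 * ρ)
  rw [hn2] at hlow
  refine le_trans ?_ (mul_le_mul_of_nonneg_left hlow (by positivity))
  have hX0 : 0 < ((2 * ρ) ^ 2 + 1) ^ |A₂| := by positivity
  rw [show (n : ℝ)⁻¹ * ((2 * ρ - ρ) * ((((2 * ρ) ^ 2 + 1) ^ |A₂|)⁻¹ * (n * n))) =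
    ρ * (n / ((2 * ρ) ^ 2 + 1) ^ |A₂|) by field_simp; ring]
  exact one_le_mul_of_one_le_of_one_le hρ ((one_le_div hX0).2 hX)

lemma inv_mul_setIntegral_weight_le (hβ : 0 < β) (hγ : 0 < γ) {n : ℕ} (hn : 0 < n)
    (hL : 4 * γ ≤ log n)
    (hpoly : log n ^ (2 * A₁ / β) * (cutoff β (4 * γ) (log n) ^ 2 + 1) ^ (|A₂| + 1) ≤
      exp (2⁻¹ * log n)) :
    (n : ℝ)⁻¹ * ∫ ω in Ioc 0 (cutoff β (4 * γ) (log n)), weight A₂ β γ ω ≤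
      log n ^ (-(2 * A₁ / β)) := by
  set L := log n
  set T := cutoff β (4 * γ) L
  have hL0 : 0 < L := by linarith
  have hT : 1 ≤ T := one_le_cutoff hβ (by positivity) hL
  have hhalf : 2 * γ * T ^ β = 2⁻¹ * L := by
    rw [← mul_cutoff_rpow hβ.ne' (by positivity : 0 < 4 * γ) hL0.le]
    ring
  have hn : (n : ℝ) = exp (2⁻¹ * L) * exp (2⁻¹ * L) := by
    rw [← exp_add, ← add_mul, show (2⁻¹ + 2⁻¹ : ℝ) = 1 by norm_num, one_mul,
      exp_log (by exact_mod_cast hn)]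
  have hup := setIntegral_weight_le (A₂ := A₂) hβ.le hγ.le (by linarith : 0 ≤ T)
  rw [hhalf] at hup
  rw [hn, rpow_neg hL0.le]
  calc (exp (2⁻¹ * L) * exp (2⁻¹ * L))⁻¹ * ∫ ω in Ioc 0 T, weight A₂ β γ ω
      ≤ (exp (2⁻¹ * L) * exp (2⁻¹ * L))⁻¹ * ((T ^ 2 + 1) ^ (|A₂| + 1) * exp (2⁻¹ * L)) := by
        gcongr
    _ = (T ^ 2 + 1) ^ (|A₂| + 1) / exp (2⁻¹ * L) := by
        field_simp
    _ ≤ (L ^ (2 * A₁ / β))⁻¹ := by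
        rw [div_le_iff₀ (exp_pos _), inv_mul_eq_div, le_div_iff₀ (by positivity), mul_comm]
        exact hpoly

lemma eventually_le_H5 (hA₁ : 0 ≤ A₁) (hβ : 0 < β) (hγ : 0 < γ) :
    ∀ᶠ n : ℕ in atTop, ∀ h, 0 < h →
      min (2 ^ (-(2 * A₁)) / γ ^ (-(2 * A₁ / β))) 1 * log n ^ (-(2 * A₁ / β)) ≤
        H5 A₁ A₂ β γ n h := by
  have hlog : Tendsto (fun n : ℕ => log n) atTop atTop :=
    tendsto_log_atTop.comp tendsto_natCast_atTop_atTop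
  filter_upwards [hlog.eventually_ge_atTop 1, hlog.eventually_ge_atTop γ,
    hlog.eventually (eventually_mul_rpow_mul_cutoff_le_exp hβ hγ
      (by positivity : 0 ≤ (4 : ℝ) ^ |A₂|) 0 (abs_nonneg A₂) one_pos),
    eventually_gt_atTop 0] with n hL hγL hpoly hn h hh
  rw [rpow_zero, mul_one, one_mul, exp_log (by exact_mod_cast hn)] at hpoly
  set ρ := cutoff β γ (log n)
  have hρ : 0 < ρ := zero_lt_one.trans_le (one_le_cutoff hβ hγ hγL)
  have hbias : 2 ^ (-(2 * A₁)) / γ ^ (-(2 * A₁ / β)) * log n ^ (-(2 * A₁ / β)) =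
      (1 / (2 * ρ)) ^ (2 * A₁) := by
    rw [one_div, inv_rpow (by positivity), ← rpow_neg (by positivity),
      mul_rpow (by norm_num) hρ.le, cutoff_rpow hγ (by linarith), neg_div]
    ring
  have hlog_rpow : log n ^ (-(2 * A₁ / β)) ≤ 1 :=
    rpow_le_one_of_one_le_of_nonpos hL (neg_nonpos.2 (by positivity))
  rw [min_mul_of_nonneg _ _ (by positivity), hbias, one_mul]
  exact (min_le_min le_rfl (hlog_rpow.trans
    (one_le_inv_mul_setIntegral_weight hβ hγ hn hγL hpoly))).trans
    (min_le_H5 hA₁ hβ.le n (by positivity) hh)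

lemma eventually_H5_le (hβ : 0 < β) (hγ : 0 < γ) :
    ∀ᶠ n : ℕ in atTop, ∃ h, 0 < h ∧
      H5 A₁ A₂ β γ n h ≤ ((4 * γ) ^ (2 * A₁ / β) + 1) * log n ^ (-(2 * A₁ / β)) := by
  have hlog : Tendsto (fun n : ℕ => log n) atTop atTop :=
    tendsto_log_atTop.comp tendsto_natCast_atTop_atTop
  filter_upwards [hlog.eventually_ge_atTop (4 * γ),
    hlog.eventually (eventually_mul_rpow_mul_cutoff_le_exp hβ (by positivity : 0 < 4 * γ)
      zero_le_one (2 * A₁ / β) (by positivity : 0 ≤ |A₂| + 1) (by norm_num : (0 : ℝ) < 2⁻¹)),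
    eventually_gt_atTop 0] with n hL hpoly hn
  rw [one_mul] at hpoly
  set T := cutoff β (4 * γ) (log n)
  have hL0 : 0 < log n := by linarith
  have hT : 0 < T := zero_lt_one.trans_le (one_le_cutoff hβ (by positivity) hL)
  have hbias : (1 / T) ^ (2 * A₁) = (4 * γ) ^ (2 * A₁ / β) * log n ^ (-(2 * A₁ / β)) := by
    rw [one_div, inv_rpow hT.le, ← rpow_neg hT.le, cutoff_rpow (by positivity) hL0.le, neg_div,
      rpow_neg hL0.le, rpow_neg (by positivity)]
    field_simp
  refine ⟨1 / T, by positivity, ?_⟩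
  rw [H5_eq, one_div_one_div, hbias]
  linarith [inv_mul_setIntegral_weight_le (A₂ := A₂) hβ hγ hn hL hpoly]

end

theorem stmt_5 (A₁ A₂ β γ : ℝ) (hA₁ : 0 < A₁) (hβ : 0 < β) (hγ : 0 < γ) :
    ∃ c C : ℝ, ∃ N : ℕ, 0 < c ∧ c ≤ C ∧ ∀ n : ℕ, N ≤ n →
      (∀ h : ℝ, 0 < h →
        c * (Real.log n) ^ (-(2 * A₁ / β)) ≤ H5 A₁ A₂ β γ n h) ∧
      (∃ h : ℝ, 0 < h ∧ H5 A₁ A₂ β γ n h ≤ C * (Real.log n) ^ (-(2 * A₁ / β))) := by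
  obtain ⟨N, hN⟩ := eventually_atTop.1
    ((eventually_le_H5 (A₂ := A₂) hA₁.le hβ hγ).and (eventually_H5_le (A₁ := A₁) hβ hγ))
  refine ⟨_, _, N, lt_min (by positivity) one_pos, ?_, hN⟩
  exact (min_le_right _ _).trans (le_add_of_nonneg_left (by positivity))
end

section
/- Let f be a probability density on ℝ with ∫ |θ| f(θ) dθ < ∞ and Fourier transform f*(ω) = ∫ e^{iωθ} f(θ) dθ. Then for every t ∈ ℝ, ∫_ℝ sign(θ − t) f(θ) dθ = (2/π) · lim_{T→∞} ∫_0^T [cos(tω) · Im f*(ω) − sin(tω) · Re f*(ω)] / ω dω, where the integrand extends continuously to ω = 0; equivalently, the cumulative distribution function F(t) = ∫_{−∞}^t f(θ) dθ equals 1/2 minus one half of this limit. -/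
/-!
Since `f*(ω) = ∫ e^{iωθ} f(θ) dθ`, the integrand at `ω ≠ 0` equals
`∫ (θ - t) sinc((θ - t) ω) f(θ) dθ`, which is continuous in `ω` by dominated convergence
with dominating function `|θ - t| |f(θ)|`; this gives its value at `ω = 0`. Integrating over
`ω ∈ (0, T]` and applying Fubini (again thanks to the first moment) turns the truncated integral
into `∫ Si((θ - t) T) f(θ) dθ`, with `Si` the sine integral. Dirichlet's integral, computed by
writing `sin x / x = ∫₀^∞ e^{-xs} sin x ds`, shows that `Si` is bounded and
`Si(a T) → (π / 2) sign a`, so dominated convergence gives the limit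
`(π / 2) ∫ sign(θ - t) f(θ) dθ`. Splitting this integral at `t` gives the formula for the
distribution function.
-/

open MeasureTheory Filter

/-- Fourier transform `t*(ω) = ∫ e^{iωx} t(x) dx` of a real-valued function. -/
noncomputable def ft (t : ℝ → ℝ) (ω : ℝ) : ℂ :=
  ∫ x : ℝ, Complex.exp (Complex.I * (ω : ℂ) * (x : ℂ)) * (t x : ℂ)

open Set Real Topology

noncomputable def sineIntegral (y : ℝ) : ℝ := ∫ u in (0 : ℝ)..y, sinc u

lemma continuous_sineIntegral : Continuous sineIntegral :=
  intervalIntegral.continuous_primitive (fun _ _ => continuous_sinc.intervalIntegrable _ _) 0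

lemma sineIntegral_zero : sineIntegral 0 = 0 := intervalIntegral.integral_same

lemma sineIntegral_neg (y : ℝ) : sineIntegral (-y) = -sineIntegral y := by
  simp only [sineIntegral]
  rw [← intervalIntegral.integral_symm, ← neg_zero, ← intervalIntegral.integral_comp_neg]
  simp only [sinc_neg, neg_zero]

lemma abs_sineIntegral_le_abs (y : ℝ) : |sineIntegral y| ≤ |y| := by
  simpa [sineIntegral] using intervalIntegral.norm_integral_le_of_norm_le_const
    (a := 0) (b := y) (C := 1) (f := sinc) fun u _ => abs_sinc_le_one u

lemma integral_exp_neg_mul_Ioi {x : ℝ} (hx : 0 < x) : ∫ s in Ioi 0, exp (-x * s) = x⁻¹ := by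
  rw [integral_exp_mul_Ioi (neg_neg_of_pos hx)]
  simp

lemma integrableOn_exp_neg_mul_Ioi {x : ℝ} (hx : 0 < x) :
    IntegrableOn (fun s => exp (-x * s)) (Ioi 0) :=
  integrableOn_exp_mul_Ioi (neg_neg_of_pos hx) 0

noncomputable def dirichletRemainder (T s : ℝ) : ℝ :=
  exp (-T * s) * (s * sin T + cos T) / (1 + s ^ 2)

lemma hasDerivAt_neg_dirichletRemainder (s x : ℝ) :
    HasDerivAt (fun x => -dirichletRemainder x s) (exp (-x * s) * sin x) x := by
  have hexp : HasDerivAt (fun x => exp (-x * s)) (exp (-x * s) * -s) x := by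
    simpa using ((hasDerivAt_id x).neg.mul_const s).exp
  have htrig : HasDerivAt (fun x => s * sin x + cos x) (s * cos x + -sin x) x :=
    ((hasDerivAt_sin x).const_mul s).add (hasDerivAt_cos x)
  refine ((hexp.mul htrig).div_const (1 + s ^ 2)).neg.congr_deriv ?_
  field_simp
  ring

lemma integral_exp_neg_mul_mul_sin (s T : ℝ) :
    ∫ x in (0 : ℝ)..T, exp (-x * s) * sin x = (1 + s ^ 2)⁻¹ - dirichletRemainder T s := by
  rw [intervalIntegral.integral_eq_sub_of_hasDerivAt
    (fun x _ => hasDerivAt_neg_dirichletRemainder s x)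
    (Continuous.intervalIntegrable (by fun_prop) _ _)]
  rw [show dirichletRemainder 0 s = (1 + s ^ 2)⁻¹ by simp [dirichletRemainder]]
  ring

lemma abs_dirichletRemainder_le (T s : ℝ) : |dirichletRemainder T s| ≤ 2 * exp (-T * s) := by
  have hs : 0 < 1 + s ^ 2 := by positivity
  have htrig : |s * sin T + cos T| ≤ 2 * (1 + s ^ 2) := by
    calc |s * sin T + cos T| ≤ |s| * 1 + 1 := by
          grw [abs_add_le, abs_mul, abs_sin_le_one, abs_cos_le_one]
      _ ≤ 2 * (1 + s ^ 2) := by nlinarith [sq_nonneg (2 * |s| - 1), sq_abs s]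
  rw [dirichletRemainder, abs_div, abs_mul, abs_exp, abs_of_pos hs, div_le_iff₀ hs]
  grw [htrig]
  exact le_of_eq (by ring)

lemma integrableOn_dirichletRemainder {T : ℝ} (hT : 0 < T) :
    IntegrableOn (dirichletRemainder T) (Ioi 0) :=
  ((integrableOn_exp_neg_mul_Ioi hT).const_mul 2).mono'
    (Continuous.div (by fun_prop) (by fun_prop) fun s => by positivity).aestronglyMeasurable
    (Eventually.of_forall fun s => abs_dirichletRemainder_le T s)

lemma integrable_exp_neg_mul_mul_sin_prod (T : ℝ) :
    Integrable (fun p : ℝ × ℝ => exp (-p.1 * p.2) * sin p.1)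
      ((volume.restrict (Ioc 0 T)).prod (volume.restrict (Ioi 0))) := by
  have hmeas : AEStronglyMeasurable (fun p : ℝ × ℝ => exp (-p.1 * p.2) * sin p.1)
      ((volume.restrict (Ioc 0 T)).prod (volume.restrict (Ioi 0))) := by fun_prop
  refine (integrable_prod_iff hmeas).2 ⟨?_, ?_⟩
  · filter_upwards [ae_restrict_mem measurableSet_Ioc] with x hx
    exact (integrableOn_exp_neg_mul_Ioi hx.1).mul_const _
  · refine (integrableOn_const (C := (1 : ℝ)) (by simp)).mono' hmeas.norm.integral_prod_right' ?_
    filter_upwards [ae_restrict_mem measurableSet_Ioc] with x hx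
    have hint : ∫ s in Ioi 0, ‖exp (-x * s) * sin x‖ = |sin x| / x := by
      simp_rw [norm_mul, norm_of_nonneg (exp_pos _).le, integral_mul_const,
        integral_exp_neg_mul_Ioi hx.1, Real.norm_eq_abs]
      ring
    rw [norm_of_nonneg (integral_nonneg fun _ => norm_nonneg _), hint, div_le_one hx.1]
    exact abs_sin_le_abs.trans_eq (abs_of_pos hx.1)

lemma sineIntegral_eq_pi_div_two_sub {T : ℝ} (hT : 0 < T) :
    sineIntegral T = π / 2 - ∫ s in Ioi 0, dirichletRemainder T s := by
  have hsinc : ∀ x ∈ Ioc (0 : ℝ) T, sinc x = ∫ s in Ioi 0, exp (-x * s) * sin x := by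
    intro x hx
    rw [sinc_of_ne_zero hx.1.ne', integral_mul_const, integral_exp_neg_mul_Ioi hx.1,
      div_eq_inv_mul]
  calc sineIntegral T = ∫ x in Ioc 0 T, sinc x := intervalIntegral.integral_of_le hT.le
    _ = ∫ x in Ioc 0 T, ∫ s in Ioi 0, exp (-x * s) * sin x :=
      setIntegral_congr_fun measurableSet_Ioc hsinc
    _ = ∫ s in Ioi 0, ∫ x in Ioc 0 T, exp (-x * s) * sin x :=
      integral_integral_swap (integrable_exp_neg_mul_mul_sin_prod T)
    _ = ∫ s in Ioi 0, ((1 + s ^ 2)⁻¹ - dirichletRemainder T s) := by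
      simp_rw [← intervalIntegral.integral_of_le hT.le, integral_exp_neg_mul_mul_sin]
    _ = π / 2 - ∫ s in Ioi 0, dirichletRemainder T s := by
      rw [integral_sub integrable_inv_one_add_sq.integrableOn
        (integrableOn_dirichletRemainder hT)]
      simp [integral_Ioi_inv_one_add_sq]

lemma abs_sineIntegral_sub_pi_div_two_le {T : ℝ} (hT : 0 < T) :
    |sineIntegral T - π / 2| ≤ 2 / T := by
  rw [sineIntegral_eq_pi_div_two_sub hT, sub_sub_cancel_left, abs_neg, ← Real.norm_eq_abs]
  calc ‖∫ s in Ioi 0, dirichletRemainder T s‖ ≤ ∫ s in Ioi 0, 2 * exp (-T * s) :=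
        norm_integral_le_of_norm_le ((integrableOn_exp_neg_mul_Ioi hT).const_mul 2)
          (Eventually.of_forall fun s => abs_dirichletRemainder_le T s)
    _ = 2 / T := by rw [integral_const_mul, integral_exp_neg_mul_Ioi hT, div_eq_mul_inv]

lemma tendsto_sineIntegral_atTop : Tendsto sineIntegral atTop (𝓝 (π / 2)) := by
  rw [tendsto_iff_norm_sub_tendsto_zero]
  refine squeeze_zero' (g := fun T => 2 / T) (Eventually.of_forall fun _ => norm_nonneg _) ?_
    (tendsto_const_nhds.div_atTop tendsto_id)
  filter_upwards [eventually_gt_atTop 0] with T hT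
  exact abs_sineIntegral_sub_pi_div_two_le hT

lemma abs_sineIntegral_le (y : ℝ) : |sineIntegral y| ≤ π / 2 + 2 := by
  wlog hy : 0 ≤ y generalizing y
  · simpa [sineIntegral_neg] using this (-y) (by linarith)
  rcases le_or_gt y 1 with hy1 | hy1
  · linarith [abs_sineIntegral_le_abs y, abs_of_nonneg hy, pi_pos]
  · have h := abs_sineIntegral_sub_pi_div_two_le (zero_lt_one.trans hy1)
    have h2 : 2 / y ≤ 2 := div_le_self zero_le_two hy1.le
    linarith [abs_sub_abs_le_abs_sub (sineIntegral y) (π / 2), abs_of_pos (half_pos pi_pos)]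

lemma integral_mul_sinc_mul (a T : ℝ) :
    ∫ ω in (0 : ℝ)..T, a * sinc (a * ω) = sineIntegral (a * T) := by
  rw [intervalIntegral.integral_const_mul, ← smul_eq_mul,
    intervalIntegral.smul_integral_comp_mul_left, mul_zero, sineIntegral]

lemma tendsto_sineIntegral_mul_atTop (a : ℝ) :
    Tendsto (fun T => sineIntegral (a * T)) atTop (𝓝 (π / 2 * Real.sign a)) := by
  rcases lt_trichotomy a 0 with ha | rfl | ha
  · have h := (tendsto_sineIntegral_atTop.comp (tendsto_id.const_mul_atTop (neg_pos.2 ha))).neg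
    rw [Real.sign_of_neg ha, mul_neg_one]
    refine h.congr fun T => ?_
    simp [neg_mul, sineIntegral_neg]
  · simp [sineIntegral_zero]
  · rw [Real.sign_of_pos ha, mul_one]
    exact tendsto_sineIntegral_atTop.comp (tendsto_id.const_mul_atTop ha)

section Density

variable {f : ℝ → ℝ}

lemma integrable_cexp_mul_ofReal (hf : Integrable f) (ω : ℝ) :
    Integrable fun x : ℝ => Complex.exp (Complex.I * ω * x) * (f x : ℂ) :=
  hf.ofReal.bdd_mul (c := 1) (by fun_prop) (Eventually.of_forall fun x => by
    rw [show Complex.I * ω * x = ((ω * x : ℝ) : ℂ) * Complex.I by push_cast; ring,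
      Complex.norm_exp_ofReal_mul_I])

lemma cexp_I_mul_mul (ω x : ℝ) :
    Complex.exp (Complex.I * ω * x) = cos (ω * x) + sin (ω * x) * Complex.I := by
  rw [show Complex.I * ω * x = ((ω * x : ℝ) : ℂ) * Complex.I by push_cast; ring,
    Complex.exp_mul_I, Complex.ofReal_cos, Complex.ofReal_sin]

lemma re_ft (hf : Integrable f) (ω : ℝ) : (ft f ω).re = ∫ x, cos (ω * x) * f x := by
  rw [ft, ← RCLike.re_to_complex, ← integral_re (integrable_cexp_mul_ofReal hf ω)]
  simp [cexp_I_mul_mul, -Complex.ofReal_cos, -Complex.ofReal_sin]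

lemma im_ft (hf : Integrable f) (ω : ℝ) : (ft f ω).im = ∫ x, sin (ω * x) * f x := by
  rw [ft, ← RCLike.im_to_complex, ← integral_im (integrable_cexp_mul_ofReal hf ω)]
  simp [cexp_I_mul_mul, -Complex.ofReal_cos, -Complex.ofReal_sin]

lemma div_eq_integral_mul_sinc (hf : Integrable f) (t : ℝ) {ω : ℝ} (hω : ω ≠ 0) :
    (cos (t * ω) * (ft f ω).im - sin (t * ω) * (ft f ω).re) / ω
      = ∫ x, (x - t) * sinc ((x - t) * ω) * f x := by
  have hcos : Integrable fun x => cos (ω * x) * f x :=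
    hf.bdd_mul (c := 1) (by fun_prop) (Eventually.of_forall fun _ => abs_cos_le_one _)
  have hsin : Integrable fun x => sin (ω * x) * f x :=
    hf.bdd_mul (c := 1) (by fun_prop) (Eventually.of_forall fun _ => abs_sin_le_one _)
  have hsinc : ∀ x, (x - t) * sinc ((x - t) * ω) = sin ((x - t) * ω) / ω := by
    intro x
    rcases eq_or_ne (x - t) 0 with h | h
    · simp [h]
    · rw [sinc_of_ne_zero (mul_ne_zero h hω)]
      field_simp
  rw [re_ft hf, im_ft hf, ← integral_const_mul, ← integral_const_mul,
    ← integral_sub (hsin.const_mul _) (hcos.const_mul _), ← integral_div]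
  congr 1 with x
  rw [hsinc, sub_mul, mul_comm x, mul_comm t, sin_sub]
  ring

lemma norm_mul_sinc_mul_le (a ω b : ℝ) : ‖a * sinc (a * ω) * b‖ ≤ ‖a * b‖ := by
  rw [norm_mul, norm_mul, norm_mul, mul_right_comm]
  exact mul_le_of_le_one_right (by positivity) (abs_sinc_le_one _)

lemma integrable_sub_mul (hf : Integrable f) (hmom : Integrable fun x => |x| * f x) (t : ℝ) :
    Integrable fun x => (x - t) * f x := by
  have hx : Integrable fun x => x * f x :=
    hmom.norm.mono' (continuous_id.aestronglyMeasurable.mul hf.aestronglyMeasurable)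
      (Eventually.of_forall fun x => by simp)
  exact (hx.sub (hf.const_mul t)).congr
    (Eventually.of_forall fun x => by simp only [Pi.sub_apply, sub_mul])

variable (t : ℝ)

lemma integral_Ioc_integral_mul_sinc (hf : Integrable f)
    (hmom : Integrable fun x => (x - t) * f x) {T : ℝ} (hT : 0 ≤ T) :
    ∫ ω in Ioc 0 T, ∫ x, (x - t) * sinc ((x - t) * ω) * f x
      = ∫ x, sineIntegral ((x - t) * T) * f x := by
  have hint : Integrable (Function.uncurry fun ω x => (x - t) * sinc ((x - t) * ω) * f x)
      ((volume.restrict (Ioc 0 T)).prod volume) :=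
    ((integrableOn_const (C := (1 : ℝ)) (by simp)).mul_prod hmom).norm.mono'
      ((by fun_prop : Continuous fun p : ℝ × ℝ => (p.2 - t) * sinc ((p.2 - t) * p.1))
        |>.aestronglyMeasurable.mul hf.aestronglyMeasurable.comp_snd)
      (Eventually.of_forall fun p => by
        simpa [Function.uncurry] using norm_mul_sinc_mul_le (p.2 - t) p.1 (f p.2))
  rw [integral_integral_swap hint]
  congr 1 with x
  rw [integral_mul_const, ← intervalIntegral.integral_of_le hT, integral_mul_sinc_mul]

lemma tendsto_integral_sineIntegral_mul_atTop (hf : Integrable f) :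
    Tendsto (fun T => ∫ x, sineIntegral ((x - t) * T) * f x) atTop
      (𝓝 (π / 2 * ∫ x, Real.sign (x - t) * f x)) := by
  have h := tendsto_integral_filter_of_dominated_convergence (fun x => (π / 2 + 2) * ‖f x‖)
    (F := fun T x => sineIntegral ((x - t) * T) * f x)
    (Eventually.of_forall fun T => (continuous_sineIntegral.comp
      (by fun_prop : Continuous fun x => (x - t) * T))
      |>.aestronglyMeasurable.mul hf.aestronglyMeasurable)
    (Eventually.of_forall fun _ => Eventually.of_forall fun x => by
      rw [norm_mul]
      gcongr
      exact abs_sineIntegral_le _)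
    (hf.norm.const_mul _)
    (Eventually.of_forall fun x => (tendsto_sineIntegral_mul_atTop (x - t)).mul_const (f x))
  simpa only [mul_assoc, integral_const_mul] using h

lemma continuous_integral_mul_sinc (hf : Integrable f)
    (hmom : Integrable fun x => (x - t) * f x) :
    Continuous fun ω => ∫ x, (x - t) * sinc ((x - t) * ω) * f x :=
  continuous_of_dominated
    (fun ω => (by fun_prop : Continuous fun x => (x - t) * sinc ((x - t) * ω))
      |>.aestronglyMeasurable.mul hf.aestronglyMeasurable)
    (fun ω => Eventually.of_forall fun x => norm_mul_sinc_mul_le _ _ _) hmom.norm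
    (Eventually.of_forall fun _ => by fun_prop)

lemma integral_sign_sub_mul (hf : Integrable f) :
    ∫ θ, Real.sign (θ - t) * f θ = (∫ θ, f θ) - 2 * ∫ θ in Iic t, f θ := by
  have h : (fun θ => Real.sign (θ - t) * f θ) =ᵐ[volume]
      fun θ => f θ - 2 * (Iic t).indicator f θ := by
    filter_upwards [Measure.ae_ne volume t] with θ hθ
    rcases hθ.lt_or_gt with h | h
    · rw [Real.sign_of_neg (sub_neg.2 h), indicator_of_mem (mem_Iic.2 h.le)]
      ring
    · rw [Real.sign_of_pos (sub_pos.2 h), indicator_of_notMem (notMem_Iic.2 h)]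
      ring
  rw [integral_congr_ae h, integral_sub hf ((hf.indicator measurableSet_Iic).const_mul 2),
    integral_const_mul, integral_indicator measurableSet_Iic]

end Density

theorem stmt_8_general (f : ℝ → ℝ)
    (hf_int : Integrable f) (hf_one : (∫ x, f x) = 1)
    (hmom : Integrable (fun θ : ℝ => |θ| * f θ)) (t : ℝ) :
    ∃ L : ℝ,
      Tendsto
        (fun T : ℝ => ∫ ω in Set.Ioc (0 : ℝ) T,
          (Real.cos (t * ω) * (ft f ω).im - Real.sin (t * ω) * (ft f ω).re) / ω)
        atTop (nhds L) ∧
      (∫ θ : ℝ, Real.sign (θ - t) * f θ) = (2 / Real.pi) * L ∧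
      (∫ θ in Set.Iic t, f θ) = 1 / 2 - (1 / Real.pi) * L ∧
      ∃ c : ℝ,
        Tendsto
          (fun ω : ℝ => (Real.cos (t * ω) * (ft f ω).im - Real.sin (t * ω) * (ft f ω).re) / ω)
          (nhdsWithin 0 (Set.Ioi 0)) (nhds c) := by
  have hmom_t := integrable_sub_mul hf_int hmom t
  refine ⟨π / 2 * ∫ θ, Real.sign (θ - t) * f θ, ?_, by field_simp, ?_, ∫ x, (x - t) * f x, ?_⟩
  · refine (tendsto_integral_sineIntegral_mul_atTop t hf_int).congr' ?_
    filter_upwards [eventually_ge_atTop 0] with T hT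
    rw [← integral_Ioc_integral_mul_sinc t hf_int hmom_t hT]
    exact setIntegral_congr_fun measurableSet_Ioc fun ω hω =>
      (div_eq_integral_mul_sinc hf_int t hω.1.ne').symm
  · rw [integral_sign_sub_mul t hf_int, hf_one]
    field_simp
    ring
  · have h := (continuous_integral_mul_sinc t hf_int hmom_t).tendsto 0
    simp only [mul_zero, sinc_zero, mul_one] at h
    refine (h.mono_left nhdsWithin_le_nhds).congr' ?_
    filter_upwards [self_mem_nhdsWithin] with ω hω
    exact (div_eq_integral_mul_sinc hf_int t (ne_of_gt hω)).symm

theorem stmt_8 (f : ℝ → ℝ)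
    (hf_nonneg : ∀ x, 0 ≤ f x) (hf_int : Integrable f) (hf_one : (∫ x, f x) = 1)
    (hmom : Integrable (fun θ : ℝ => |θ| * f θ)) (t : ℝ) :
    ∃ L : ℝ,
      Tendsto
        (fun T : ℝ => ∫ ω in Set.Ioc (0 : ℝ) T,
          (Real.cos (t * ω) * (ft f ω).im - Real.sin (t * ω) * (ft f ω).re) / ω)
        atTop (nhds L) ∧
      (∫ θ : ℝ, Real.sign (θ - t) * f θ) = (2 / Real.pi) * L ∧
      (∫ θ in Set.Iic t, f θ) = 1 / 2 - (1 / Real.pi) * L ∧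
      ∃ c : ℝ,
        Tendsto
          (fun ω : ℝ => (Real.cos (t * ω) * (ft f ω).im - Real.sin (t * ω) * (ft f ω).re) / ω)
          (nhdsWithin 0 (Set.Ioi 0)) (nhds c) :=
  stmt_8_general f hf_int hf_one hmom t
end

section
/- Let v ≥ 1, b > 0, C_v > 0 and define f(θ) = C_v b (1 + b²θ²)^{−v}. Let g be a probability density on ℝ and suppose there exists A > 0 with ∫_{−A}^{A} g(x) dx = C_A > 0. Then there exists a constant C_{bg} > 0, depending only on v, C_v, b, A and C_A, such that q(x) = ∫_ℝ g(x−θ) f(θ) dθ ≥ C_{bg} (x²+1)^{−v} for every x ∈ ℝ. -/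
/-! Restrict the convolution to the window |y| ≤ A, where g has mass C_A. There
1 + b²(x - y)² ≤ K (x² + 1) with K = 1 + 2b²A² + 2b², so f(x - y) ≥ C_v b K^{-v} (x² + 1)^{-v},
and C_bg = C_v b C_A K^{-v} works. -/

open MeasureTheory

theorem mul_setIntegral_le_integral_comp_sub_mul {G : Type*} [AddCommGroup G] [MeasurableSpace G]
    [MeasurableAdd G] [MeasurableNeg G] {μ : Measure G} [μ.IsAddLeftInvariant] [μ.IsNegInvariant]
    {g f : G → ℝ} {s : Set G} {x : G} {c C : ℝ} (hs : MeasurableSet s) (hg : ∀ y, 0 ≤ g y)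
    (hgi : Integrable g μ) (hfm : Measurable f) (hf0 : ∀ θ, 0 ≤ f θ) (hfC : ∀ θ, f θ ≤ C)
    (hfc : ∀ y ∈ s, c ≤ f (x - y)) :
    c * ∫ y in s, g y ∂μ ≤ ∫ θ, g (x - θ) * f θ ∂μ := by
  have hint : Integrable (fun y => g y * f (x - y)) μ :=
    hgi.mul_bdd (hfm.comp (measurable_id.const_sub x)).aestronglyMeasurable
      (.of_forall fun y => by rw [Real.norm_of_nonneg (hf0 _)]; exact hfC _)
  calc c * ∫ y in s, g y ∂μ = ∫ y in s, g y * c ∂μ := by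
        rw [integral_mul_const, mul_comm]
    _ ≤ ∫ y in s, g y * f (x - y) ∂μ :=
        setIntegral_mono_on (hgi.integrableOn.mul_const _) hint.integrableOn hs
          fun y hy => mul_le_mul_of_nonneg_left (hfc y hy) (hg y)
    _ ≤ ∫ y, g y * f (x - y) ∂μ :=
        setIntegral_le_integral hint (.of_forall fun y => mul_nonneg (hg y) (hf0 _))
    _ = ∫ θ, g (x - θ) * f θ ∂μ := by
        rw [← integral_sub_left_eq_self _ μ x]; simp only [sub_sub_cancel]

theorem one_add_sq_mul_sub_sq_le {A b x y : ℝ} (hy : |y| ≤ A) :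
    1 + b ^ 2 * (x - y) ^ 2 ≤ (1 + 2 * b ^ 2 * A ^ 2 + 2 * b ^ 2) * (x ^ 2 + 1) := by
  have hy2 : y ^ 2 ≤ A ^ 2 := sq_le_sq' (abs_le.mp hy).1 (abs_le.mp hy).2
  have hxy : (x - y) ^ 2 ≤ 2 * x ^ 2 + 2 * A ^ 2 := by nlinarith [sq_nonneg (x + y)]
  nlinarith [mul_le_mul_of_nonneg_left hxy (sq_nonneg b), sq_nonneg (b * A * x), sq_nonneg x]

theorem one_add_mul_sq_rpow_neg_le_one {b θ v : ℝ} (hv : 0 ≤ v) :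
    (1 + b ^ 2 * θ ^ 2) ^ (-v) ≤ 1 :=
  Real.rpow_le_one_of_one_le_of_nonpos (by nlinarith [sq_nonneg (b * θ)]) (neg_nonpos.2 hv)

theorem stmt_16_general (v b Cv A CA : ℝ) (hv : 1 ≤ v) (hb : 0 < b) (hCv : 0 < Cv)
    (hCA : 0 < CA) :
    ∃ Cbg : ℝ, 0 < Cbg ∧
      ∀ g : ℝ → ℝ, (∀ x, 0 ≤ g x) → Integrable g → (∫ x, g x) = 1 →
        (∫ x in Set.Icc (-A) A, g x) = CA →
        ∀ x : ℝ, Cbg * (x ^ 2 + 1) ^ (-v) ≤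
          ∫ θ : ℝ, g (x - θ) * (Cv * b * (1 + b ^ 2 * θ ^ 2) ^ (-v)) := by
  set K : ℝ := 1 + 2 * b ^ 2 * A ^ 2 + 2 * b ^ 2
  have hv₀ : 0 ≤ v := zero_le_one.trans hv
  refine ⟨Cv * b * CA * K ^ (-v), by positivity, fun g hg hgi _ hgA x => ?_⟩
  have hkernel : ∀ y ∈ Set.Icc (-A) A,
      Cv * b * (K * (x ^ 2 + 1)) ^ (-v) ≤ Cv * b * (1 + b ^ 2 * (x - y) ^ 2) ^ (-v) :=
    fun y hy => mul_le_mul_of_nonneg_left (Real.rpow_le_rpow_of_nonpos (by positivity)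
      (one_add_sq_mul_sub_sq_le (abs_le.2 hy)) (neg_nonpos.2 hv₀)) (by positivity)
  have hbound := mul_setIntegral_le_integral_comp_sub_mul (μ := volume)
    (f := fun θ => Cv * b * (1 + b ^ 2 * θ ^ 2) ^ (-v)) measurableSet_Icc hg hgi (by fun_prop)
    (fun θ => by positivity)
    (fun θ => mul_le_of_le_one_right (by positivity) (one_add_mul_sq_rpow_neg_le_one hv₀))
    hkernel
  rw [hgA] at hbound
  calc Cv * b * CA * K ^ (-v) * (x ^ 2 + 1) ^ (-v)
      = Cv * b * (K * (x ^ 2 + 1)) ^ (-v) * CA := by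
        rw [Real.mul_rpow (by positivity) (by positivity)]; ring
    _ ≤ _ := hbound

theorem stmt_16 (v b Cv A CA : ℝ) (hv : 1 ≤ v) (hb : 0 < b) (hCv : 0 < Cv)
    (hA : 0 < A) (hCA : 0 < CA) :
    ∃ Cbg : ℝ, 0 < Cbg ∧
      ∀ g : ℝ → ℝ, (∀ x, 0 ≤ g x) → Integrable g → (∫ x, g x) = 1 →
        (∫ x in Set.Icc (-A) A, g x) = CA →
        ∀ x : ℝ, Cbg * (x ^ 2 + 1) ^ (-v) ≤
          ∫ θ : ℝ, g (x - θ) * (Cv * b * (1 + b ^ 2 * θ ^ 2) ^ (-v)) :=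
  stmt_16_general v b Cv A CA hv hb hCv hCA
end

section
/- Let v ≥ 1 be an integer, let P_1 be continuous and non-vanishing on [1,2] and P_2 continuous on [3,4], and define the even function K : ℝ → [0,1] by K(ω) = (|ω|−1)^v P_1(|ω|) for 1 < |ω| < 2, K(ω) = 1 for 2 ≤ |ω| ≤ 3, K(ω) = (4−|ω|)^v P_2(|ω|) for 3 < |ω| < 4, and K(ω) = 0 otherwise; assume 0 ≤ K ≤ 1. Let A ∈ ℝ, G ≥ 0, ℵ ≥ 0, and l ∈ {1, 2}, and define J_l(h) = ∫_ℝ (ω²+1)^{−A} exp(−G|ω|^ℵ) K(ωh)^l dω for h > 0. Then, as h → 0⁺: (i) if G = 0, there exist constants 0 < c ≤ C and h_0 > 0 with c · h^{2A−1} ≤ J_l(h) ≤ C · h^{2A−1} for all 0 < h < h_0; (ii) if G > 0 and ℵ > 0, there exist constants 0 < c ≤ C and h_0 > 0 with c · h^{2A+ℵ(lv+1)−1} exp(−G h^{−ℵ}) ≤ J_l(h) ≤ C · h^{2A+ℵ(lv+1)−1} exp(−G h^{−ℵ}) for all 0 < h < h_0. -/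
/-!
Write `α` for `ℵ`. Substituting `x = ω h` gives
`J_l(h) = h⁻¹ ∫ ((x / h) ^ 2 + 1) ^ (-A) exp (-s |x| ^ α) K(x) ^ l dx` with `s = G h ^ (-α)`.
On the support `1 < |x| < 4` of `K` the weight is comparable to `h ^ (2 A)`, so
`J_l(h) ≍ h ^ (2 A - 1) I(s)` with `I(s) = ∫ exp (-s |x| ^ α) K(x) ^ l dx`.
For `G = 0` this is `h ^ (2 A - 1)` times the positive constant `∫ K ^ l`. For `G > 0` the
parameter `s` tends to infinity and `I(s)` is a Laplace integral concentrated at the inner edge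
`|x| = 1`, where `K ^ l` vanishes like `(|x| - 1) ^ (l v)`: a Gamma integral gives
`I(s) ≍ s ^ (-(l v + 1)) exp (-s)`, the plateau `|x| ≥ 2` contributing only `exp (-2 ^ α s)`.
-/

open MeasureTheory Real Set

theorem exp_neg_le_factorial_div_pow (n : ℕ) {y : ℝ} (hy : 0 < y) :
    exp (-y) ≤ n.factorial / y ^ n := by
  have := pow_div_factorial_le_exp y hy.le n
  rw [exp_neg, inv_le_comm₀ (exp_pos y) (by positivity), inv_div]
  rwa [div_le_iff₀ (by positivity)] at this ⊢

theorem one_add_mul_sub_le_rpow {x α : ℝ} (hα : 0 ≤ α) (h1 : 1 ≤ x) (h2 : x ≤ 2) :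
    1 + α / 2 * (x - 1) ≤ x ^ α := by
  have hx : 0 < x := by linarith
  have hlog : (x - 1) / 2 ≤ log x := by
    refine le_trans ?_ (one_sub_inv_le_log_of_pos hx)
    rw [show 1 - x⁻¹ = (x - 1) / x by field_simp]
    exact div_le_div_of_nonneg_left (by linarith) hx h2
  calc 1 + α / 2 * (x - 1) ≤ 1 + α * log x := by nlinarith
    _ ≤ exp (α * log x) := by linarith [add_one_le_exp (α * log x)]
    _ = x ^ α := by rw [rpow_def_of_pos hx, mul_comm]

theorem one_add_rpow_le {t α : ℝ} (hα : 0 ≤ α) (ht0 : 0 ≤ t) (ht1 : t ≤ 1) :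
    (1 + t) ^ α ≤ 1 + α * exp α * t := by
  have hexp : (1 + t) ^ α ≤ exp (α * t) := by
    rw [mul_comm, exp_mul]
    exact rpow_le_rpow (by linarith) (by linarith [add_one_le_exp t]) hα
  have hy : exp (α * t) ≤ 1 + α * t * exp (α * t) := by
    have := mul_le_mul_of_nonneg_left (one_sub_le_exp_neg (α * t)) (exp_pos (α * t)).le
    rw [← exp_add, add_neg_cancel, exp_zero] at this
    linarith
  have hle : exp (α * t) ≤ exp α := exp_le_exp.mpr (by nlinarith)
  nlinarith [mul_nonneg hα ht0]

theorem IsCompact.exists_forall_mem_Icc_of_pos {X : Type*} [TopologicalSpace X] {s : Set X}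
    (hs : IsCompact s) {f : X → ℝ} (hf : ContinuousOn f s) (hpos : ∀ x ∈ s, 0 < f x) :
    ∃ c C, 0 < c ∧ c ≤ C ∧ ∀ x ∈ s, f x ∈ Icc c C := by
  obtain ⟨C, hC⟩ := hs.bddAbove_image hf
  rcases s.eq_empty_or_nonempty with rfl | hne
  · exact ⟨1, 1, one_pos, le_rfl, by simp⟩
  obtain ⟨x₀, hx₀, hmin⟩ := hs.exists_isMinOn hne hf
  exact ⟨f x₀, C, hpos x₀ hx₀, hC (mem_image_of_mem f hx₀),
    fun x hx => ⟨hmin hx, hC (mem_image_of_mem f hx)⟩⟩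

theorem integral_mul_mem_Icc {X : Type*} [MeasurableSpace X] {μ : Measure X} {f g : X → ℝ}
    {a b : ℝ} (hf : AEStronglyMeasurable f μ) (hg : Integrable g μ) (hg0 : ∀ x, 0 ≤ g x)
    (hfg : ∀ x, g x ≠ 0 → f x ∈ Icc a b) :
    a * ∫ x, g x ∂μ ≤ ∫ x, f x * g x ∂μ ∧ ∫ x, f x * g x ∂μ ≤ b * ∫ x, g x ∂μ := by
  have hbound : ∀ x, (a * g x ≤ f x * g x ∧ f x * g x ≤ b * g x) ∧
      ‖f x * g x‖ ≤ (|a| + |b|) * g x := by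
    intro x
    rcases eq_or_ne (g x) 0 with h0 | h0
    · simp [h0]
    obtain ⟨hfa, hfb⟩ := hfg x h0
    refine ⟨⟨mul_le_mul_of_nonneg_right hfa (hg0 x), mul_le_mul_of_nonneg_right hfb (hg0 x)⟩, ?_⟩
    rw [norm_mul, Real.norm_of_nonneg (hg0 x)]
    refine mul_le_mul_of_nonneg_right (abs_le.mpr ⟨?_, ?_⟩) (hg0 x) <;>
      linarith [neg_abs_le a, le_abs_self b, abs_nonneg a, abs_nonneg b]
  have hfg_int : Integrable (fun x => f x * g x) μ :=
    (hg.const_mul _).mono' (hf.mul hg.aestronglyMeasurable) (ae_of_all _ fun x => (hbound x).2)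
  rw [← integral_const_mul, ← integral_const_mul]
  exact ⟨integral_mono (hg.const_mul a) hfg_int fun x => (hbound x).1.1,
    integral_mono hfg_int (hg.const_mul b) fun x => (hbound x).1.2⟩

theorem integral_pow_mul_exp_neg_mul_Ioi (n : ℕ) {β : ℝ} (hβ : 0 < β) :
    ∫ u in Ioi 0, u ^ n * exp (-(β * u)) = n.factorial / β ^ (n + 1) := by
  have h := integral_rpow_mul_exp_neg_mul_Ioi (a := n + 1) (by positivity) hβ
  rw [add_sub_cancel_right, Gamma_nat_eq_factorial, ← Nat.cast_succ, rpow_natCast] at h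
  simp_rw [rpow_natCast] at h
  rw [h, one_div, inv_pow, inv_mul_eq_div]

noncomputable def gammaKernel (n : ℕ) (β : ℝ) : ℝ → ℝ :=
  (Ioi 0).indicator fun u => u ^ n * exp (-(β * u))

namespace gammaKernel

variable {n : ℕ} {β : ℝ}

theorem nonneg (u : ℝ) : 0 ≤ gammaKernel n β u :=
  indicator_nonneg (fun u (hu : 0 < u) => by positivity) u

theorem integral (hβ : 0 < β) : ∫ u, gammaKernel n β u = n.factorial / β ^ (n + 1) := by
  rw [gammaKernel, integral_indicator measurableSet_Ioi, integral_pow_mul_exp_neg_mul_Ioi n hβ]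

theorem integrable (hβ : 0 < β) : Integrable (gammaKernel n β) :=
  Integrable.of_integral_ne_zero (by rw [integral hβ]; positivity)

theorem abs_sub_one (x : ℝ) :
    gammaKernel n β (|x| - 1) = gammaKernel n β (x - 1) + gammaKernel n β (-x - 1) := by
  rcases le_total 0 x with hx | hx
  · rw [abs_of_nonneg hx, gammaKernel, indicator_of_notMem (show -x - 1 ∉ Ioi 0 by
      simp only [mem_Ioi]; linarith), add_zero]
  · rw [abs_of_nonpos hx, gammaKernel, indicator_of_notMem (show x - 1 ∉ Ioi 0 by
      simp only [mem_Ioi]; linarith), zero_add]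

theorem integrable_neg_sub_one (hβ : 0 < β) : Integrable fun x => gammaKernel n β (-x - 1) := by
  simpa [sub_eq_add_neg, add_comm] using ((integrable hβ).comp_sub_right 1).comp_neg

theorem integrable_abs_sub_one (hβ : 0 < β) : Integrable fun x => gammaKernel n β (|x| - 1) := by
  simp_rw [abs_sub_one]
  exact ((integrable hβ).comp_sub_right 1).add (integrable_neg_sub_one hβ)

theorem integral_abs_sub_one (hβ : 0 < β) :
    ∫ x, gammaKernel n β (|x| - 1) = 2 * (n.factorial / β ^ (n + 1)) := by
  simp_rw [abs_sub_one]
  rw [integral_add ((integrable hβ).comp_sub_right 1) (integrable_neg_sub_one hβ),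
    integral_neg_eq_self (fun x => gammaKernel n β (x - 1)), integral_sub_right_eq_self,
    integral hβ, two_mul]

end gammaKernel

noncomputable def laplaceIntegral (k : ℝ → ℝ) (α s : ℝ) : ℝ := ∫ x, exp (-s * |x| ^ α) * k x

theorem integrable_exp_neg_mul_rpow_mul {k : ℝ → ℝ} (hk : Integrable k) (α : ℝ) {s : ℝ}
    (hs : 0 ≤ s) : Integrable fun x => exp (-s * |x| ^ α) * k x := by
  refine hk.bdd_mul (c := 1) (by fun_prop : Measurable _).aestronglyMeasurable
    (ae_of_all _ fun x => ?_)
  rw [Real.norm_of_nonneg (exp_nonneg _), exp_le_one_iff]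
  have := rpow_nonneg (abs_nonneg x) α
  nlinarith

theorem exists_le_laplaceIntegral {k : ℝ → ℝ} {n : ℕ} {α m : ℝ} (hα : 0 ≤ α) (hm : 0 < m)
    (hk : Integrable k) (hk0 : ∀ x, 0 ≤ k x)
    (hk_lower : ∀ x, 1 < |x| → |x| < 2 → m * (|x| - 1) ^ n ≤ k x) :
    ∃ c, 0 < c ∧ ∀ s, 1 ≤ s → c * ((s ^ (n + 1))⁻¹ * exp (-s)) ≤ laplaceIntegral k α s := by
  refine ⟨m / 2 ^ (n + 1) * exp (-(α * exp α)), by positivity, fun s hs => ?_⟩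
  set t := s⁻¹
  have ht0 : 0 < t := by positivity
  have ht1 : t ≤ 1 := inv_le_one_of_one_le₀ hs
  have hint := integrable_exp_neg_mul_rpow_mul hk α (s := s) (by linarith)
  have hpt : ∀ x ∈ Ioo (1 + t / 2) (1 + t),
      exp (-(s + α * exp α)) * (m * (t / 2) ^ n) ≤ exp (-s * |x| ^ α) * k x := by
    rintro x ⟨hx1, hx2⟩
    have habs : |x| = x := abs_of_pos (by linarith)
    have hk_x : m * (t / 2) ^ n ≤ k x := by
      refine le_trans ?_ (hk_lower x (by linarith) (by linarith))
      rw [habs]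
      gcongr
      linarith
    have hpow : s * |x| ^ α ≤ s + α * exp α :=
      calc s * |x| ^ α ≤ s * (1 + α * exp α * t) := by
            rw [habs]
            gcongr
            exact (rpow_le_rpow (by linarith) hx2.le hα).trans (one_add_rpow_le hα ht0.le ht1)
        _ = s + α * exp α := by
            rw [mul_add, mul_one, mul_left_comm, mul_inv_cancel₀ (by positivity), mul_one]
    gcongr
    linarith
  calc m / 2 ^ (n + 1) * exp (-(α * exp α)) * ((s ^ (n + 1))⁻¹ * exp (-s))
      = volume.real (Ioo (1 + t / 2) (1 + t)) * (exp (-(s + α * exp α)) * (m * (t / 2) ^ n)) := by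
        rw [Real.volume_real_Ioo_of_le (by linarith), neg_add, exp_add]
        simp only [t, inv_pow, div_pow]
        ring
    _ ≤ ∫ x in Ioo (1 + t / 2) (1 + t), exp (-s * |x| ^ α) * k x :=
        setIntegral_ge_of_const_le measurableSet_Ioo (by simp) hpt hint.integrableOn
    _ ≤ laplaceIntegral k α s :=
        setIntegral_le_integral hint (ae_of_all _ fun x => mul_nonneg (exp_nonneg _) (hk0 x))

theorem exp_neg_mul_rpow_le_of_le_two {s α y : ℝ} (hs : 0 ≤ s) (hα : 0 ≤ α) (h1 : 1 ≤ y)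
    (h2 : y ≤ 2) : exp (-s * y ^ α) ≤ exp (-s) * exp (-(s * α / 2 * (y - 1))) := by
  rw [← exp_add, exp_le_exp]
  nlinarith [one_add_mul_sub_le_rpow hα h1 h2]

theorem exp_neg_mul_rpow_le_of_two_le {s α y : ℝ} (hs : 0 ≤ s) (hα : 0 ≤ α) (h2 : 2 ≤ y) :
    exp (-s * y ^ α) ≤ exp (-(s * 2 ^ α)) := by
  rw [exp_le_exp, neg_mul, neg_le_neg_iff]
  gcongr

theorem exp_neg_mul_rpow_mul_le {k : ℝ → ℝ} {n : ℕ} {α M s : ℝ} (hα : 0 ≤ α) (hM : 0 ≤ M)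
    (hs : 0 ≤ s) (hk_le_one : ∀ x, k x ≤ 1) (hk_zero : ∀ x, |x| ≤ 1 ∨ 4 ≤ |x| → k x = 0)
    (hk_upper : ∀ x, 1 < |x| → |x| < 2 → k x ≤ M * (|x| - 1) ^ n) (x : ℝ) :
    exp (-s * |x| ^ α) * k x ≤ M * exp (-s) * gammaKernel n (s * α / 2) (|x| - 1) +
      (Icc (-4 : ℝ) 4).indicator (fun _ => exp (-(s * 2 ^ α))) x := by
  have hγ := gammaKernel.nonneg (n := n) (β := s * α / 2) (|x| - 1)
  have hind : 0 ≤ (Icc (-4 : ℝ) 4).indicator (fun _ => exp (-(s * 2 ^ α))) x :=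
    indicator_nonneg (fun _ _ => (exp_pos _).le) x
  rcases le_or_gt |x| 1 with h1 | h1
  · rw [hk_zero x (Or.inl h1), mul_zero]
    positivity
  rcases lt_or_ge |x| 2 with h2 | h2
  · refine le_add_of_le_of_nonneg ?_ hind
    calc exp (-s * |x| ^ α) * k x ≤ exp (-s * |x| ^ α) * (M * (|x| - 1) ^ n) :=
          mul_le_mul_of_nonneg_left (hk_upper x h1 h2) (exp_pos _).le
      _ ≤ exp (-s) * exp (-(s * α / 2 * (|x| - 1))) * (M * (|x| - 1) ^ n) := by
          gcongr
          exact exp_neg_mul_rpow_le_of_le_two hs hα h1.le h2.le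
      _ = M * exp (-s) * gammaKernel n (s * α / 2) (|x| - 1) := by
          rw [gammaKernel, indicator_of_mem (show |x| - 1 ∈ Ioi 0 from sub_pos.mpr h1)]
          ring
  rcases lt_or_ge |x| 4 with h4 | h4
  · refine le_add_of_nonneg_of_le (by positivity) ?_
    calc exp (-s * |x| ^ α) * k x ≤ exp (-s * |x| ^ α) * 1 :=
          mul_le_mul_of_nonneg_left (hk_le_one x) (exp_pos _).le
      _ ≤ exp (-(s * 2 ^ α)) * 1 :=
          mul_le_mul_of_nonneg_right (exp_neg_mul_rpow_le_of_two_le hs hα h2) zero_le_one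
      _ = _ := by rw [indicator_of_mem (show x ∈ Icc (-4 : ℝ) 4 from abs_le.mp h4.le), mul_one]
  · rw [hk_zero x (Or.inr h4), mul_zero]
    positivity

theorem exists_laplaceIntegral_le {k : ℝ → ℝ} {n : ℕ} {α M : ℝ} (hα : 0 < α) (hM : 0 ≤ M)
    (hk : Integrable k) (hk_le_one : ∀ x, k x ≤ 1)
    (hk_zero : ∀ x, |x| ≤ 1 ∨ 4 ≤ |x| → k x = 0)
    (hk_upper : ∀ x, 1 < |x| → |x| < 2 → k x ≤ M * (|x| - 1) ^ n) :
    ∃ C, ∀ s, 0 < s → laplaceIntegral k α s ≤ C * ((s ^ (n + 1))⁻¹ * exp (-s)) := by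
  refine ⟨2 * M * n.factorial * (2 / α) ^ (n + 1) + 8 * (n + 1).factorial / (2 ^ α - 1) ^ (n + 1),
    fun s hs => ?_⟩
  have hβ : 0 < s * α / 2 := by positivity
  have hind : Integrable ((Icc (-4 : ℝ) 4).indicator fun _ => exp (-(s * 2 ^ α))) :=
    (integrableOn_const (by simp)).integrable_indicator measurableSet_Icc
  have h2α : (0 : ℝ) < 2 ^ α - 1 := sub_pos.mpr (one_lt_rpow (by norm_num) hα)
  have hexp : exp (-(s * 2 ^ α)) ≤
      exp (-s) * ((n + 1).factorial / ((2 ^ α - 1) * s) ^ (n + 1)) := by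
    rw [show -(s * 2 ^ α) = -s + -((2 ^ α - 1) * s) by ring, exp_add]
    gcongr
    exact exp_neg_le_factorial_div_pow (n + 1) (by positivity)
  calc laplaceIntegral k α s
      ≤ ∫ x, M * exp (-s) * gammaKernel n (s * α / 2) (|x| - 1) +
          (Icc (-4 : ℝ) 4).indicator (fun _ => exp (-(s * 2 ^ α))) x :=
        integral_mono (integrable_exp_neg_mul_rpow_mul hk α hs.le)
          (((gammaKernel.integrable_abs_sub_one hβ).const_mul _).add hind)
          (exp_neg_mul_rpow_mul_le hα.le hM hs.le hk_le_one hk_zero hk_upper)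
    _ = M * exp (-s) * (2 * (n.factorial / (s * α / 2) ^ (n + 1))) + 8 * exp (-(s * 2 ^ α)) := by
        rw [integral_add ((gammaKernel.integrable_abs_sub_one hβ).const_mul _) hind,
          integral_const_mul, gammaKernel.integral_abs_sub_one hβ,
          integral_indicator_const _ measurableSet_Icc, Real.volume_real_Icc_of_le (by norm_num),
          smul_eq_mul]
        norm_num
    _ ≤ M * exp (-s) * (2 * (n.factorial / (s * α / 2) ^ (n + 1))) +
          8 * (exp (-s) * ((n + 1).factorial / ((2 ^ α - 1) * s) ^ (n + 1))) := by gcongr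
    _ = _ := by
        generalize (2 : ℝ) ^ α - 1 = a at h2α ⊢
        rw [div_pow, div_pow, mul_pow, mul_pow]
        field_simp

theorem rpow_neg_div_sq_add_one (A : ℝ) {h : ℝ} (hh : 0 < h) (x : ℝ) :
    ((x / h) ^ 2 + 1) ^ (-A) = (x ^ 2 + h ^ 2) ^ (-A) * h ^ (2 * A) := by
  rw [show (x / h) ^ 2 + 1 = (x ^ 2 + h ^ 2) * (h ^ 2)⁻¹ by field_simp,
    mul_rpow (by positivity) (by positivity), inv_rpow (by positivity), ← rpow_neg (by positivity),
    neg_neg, ← rpow_natCast_mul hh.le]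
  norm_num

theorem exists_rpow_neg_div_sq_add_one_mem_Icc (A : ℝ) :
    ∃ c C, 0 < c ∧ c ≤ C ∧ ∀ h x : ℝ, 0 < h → h ≤ 1 → 1 ≤ |x| → |x| ≤ 4 →
      ((x / h) ^ 2 + 1) ^ (-A) ∈ Icc (c * h ^ (2 * A)) (C * h ^ (2 * A)) := by
  obtain ⟨c, C, hc, hcC, hbound⟩ :=
    (isCompact_Icc (a := (1 : ℝ)) (b := 17)).exists_forall_mem_Icc_of_pos (f := fun y => y ^ (-A))
      (continuousOn_id.rpow_const fun y hy => Or.inl (by simp only [id]; linarith [hy.1]))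
      fun y hy => rpow_pos_of_pos (by linarith [hy.1]) (-A)
  refine ⟨c, C, hc, hcC, fun h x hh hh1 hx1 hx4 => ?_⟩
  have hx2 : x ^ 2 = |x| ^ 2 := (sq_abs x).symm
  obtain ⟨hlo, hhi⟩ := hbound (x ^ 2 + h ^ 2) ⟨by nlinarith, by nlinarith⟩
  rw [rpow_neg_div_sq_add_one A hh]
  have := rpow_nonneg hh.le (2 * A)
  exact ⟨mul_le_mul_of_nonneg_right hlo this, mul_le_mul_of_nonneg_right hhi this⟩

theorem integral_comp_mul_right_eq (K : ℝ → ℝ) (A G α : ℝ) (l : ℕ) {h : ℝ} (hh : 0 < h) :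
    ∫ ω, (ω ^ 2 + 1) ^ (-A) * exp (-G * |ω| ^ α) * K (ω * h) ^ l =
      h⁻¹ * ∫ x, ((x / h) ^ 2 + 1) ^ (-A) * (exp (-(G * h ^ (-α)) * |x| ^ α) * K x ^ l) := by
  rw [← abs_of_pos (inv_pos.mpr hh), ← smul_eq_mul, ← Measure.integral_comp_mul_right]
  congr 1 with ω
  rw [mul_div_cancel_right₀ _ hh.ne', abs_mul, abs_of_pos hh, mul_rpow (abs_nonneg ω) hh.le,
    rpow_neg hh.le]
  field_simp

theorem rpow_mul_inv_pow_mul_exp {h G : ℝ} (hh : 0 < h) (A α : ℝ) (n : ℕ) :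
    h ^ (2 * A - 1) * (((G * h ^ (-α)) ^ (n + 1))⁻¹ * exp (-(G * h ^ (-α)))) =
      (G ^ (n + 1))⁻¹ * (h ^ (2 * A + α * (n + 1) - 1) * exp (-G * h ^ (-α))) := by
  rw [mul_pow, mul_inv, ← rpow_natCast (h ^ (-α)), ← rpow_mul hh.le, ← rpow_neg hh.le, neg_mul,
    neg_neg, show 2 * A + α * (n + 1) - 1 = 2 * A - 1 + α * ((n + 1 : ℕ) : ℝ) by push_cast; ring,
    rpow_add hh, neg_mul]
  ring

theorem one_le_mul_rpow_neg {G α h : ℝ} (hG : 0 < G) (hα : 0 < α) (hh : 0 < h)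
    (hhG : h ≤ G ^ α⁻¹) : 1 ≤ G * h ^ (-α) := by
  have hhα : h ^ α ≤ G := by
    simpa [rpow_inv_rpow hG.le hα.ne'] using rpow_le_rpow hh.le hhG hα.le
  rwa [rpow_neg hh.le, ← div_eq_mul_inv, one_le_div (rpow_pos_of_pos hh α)]

theorem ContinuousAt.congr_of_abs_mem_Ioo {K g : ℝ → ℝ} {x a b : ℝ} (hg : ContinuousAt g x)
    (hx : |x| ∈ Ioo a b) (hKg : ∀ y, |y| ∈ Ioo a b → K y = g y) : ContinuousAt K x :=
  hg.congr <| Filter.mem_of_superset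
    (continuous_abs.continuousAt.preimage_mem_nhds (isOpen_Ioo.mem_nhds hx))
    fun y hy => (hKg y hy).symm

structure PlateauKernel (v : ℕ) (P₁ P₂ K : ℝ → ℝ) : Prop where
  continuousOn_left : ContinuousOn P₁ (Icc 1 2)
  continuousOn_right : ContinuousOn P₂ (Icc 3 4)
  eq_left : ∀ ω : ℝ, 1 < |ω| → |ω| < 2 → K ω = (|ω| - 1) ^ v * P₁ |ω|
  eq_one : ∀ ω : ℝ, 2 ≤ |ω| → |ω| ≤ 3 → K ω = 1
  eq_right : ∀ ω : ℝ, 3 < |ω| → |ω| < 4 → K ω = (4 - |ω|) ^ v * P₂ |ω|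
  eq_zero : ∀ ω : ℝ, (|ω| ≤ 1 ∨ 4 ≤ |ω|) → K ω = 0
  nonneg : ∀ ω : ℝ, 0 ≤ K ω
  le_one : ∀ ω : ℝ, K ω ≤ 1

namespace PlateauKernel

variable {v : ℕ} {P₁ P₂ K : ℝ → ℝ}

theorem continuousAt (hK : PlateauKernel v P₁ P₂ K) {x : ℝ}
    (hx : |x| ∉ ({1, 2, 3, 4} : Set ℝ)) : ContinuousAt K x := by
  simp only [mem_insert_iff, mem_singleton_iff, not_or] at hx
  obtain ⟨h1, h2, h3, h4⟩ := hx
  have hP {P : ℝ → ℝ} {a b : ℝ} (hP : ContinuousOn P (Icc a b)) (ha : a < |x|) (hb : |x| < b) :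
      ContinuousAt (fun y => P |y|) x :=
    (hP.continuousAt (Icc_mem_nhds ha hb)).comp continuous_abs.continuousAt
  rcases lt_or_gt_of_ne h1 with h1 | h1
  · exact continuousAt_const.congr_of_abs_mem_Ioo (a := -1) ⟨by linarith [abs_nonneg x], h1⟩
      fun y hy => hK.eq_zero y (Or.inl hy.2.le)
  rcases lt_or_gt_of_ne h2 with h2 | h2
  · exact (((continuous_abs.sub continuous_const).pow v).continuousAt.mul
      (hP hK.continuousOn_left h1 h2)).congr_of_abs_mem_Ioo ⟨h1, h2⟩
      fun y hy => hK.eq_left y hy.1 hy.2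
  rcases lt_or_gt_of_ne h3 with h3 | h3
  · exact continuousAt_const.congr_of_abs_mem_Ioo ⟨h2, h3⟩
      fun y hy => hK.eq_one y hy.1.le hy.2.le
  rcases lt_or_gt_of_ne h4 with h4 | h4
  · exact (((continuous_const.sub continuous_abs).pow v).continuousAt.mul
      (hP hK.continuousOn_right h3 h4)).congr_of_abs_mem_Ioo ⟨h3, h4⟩
      fun y hy => hK.eq_right y hy.1 hy.2
  · exact continuousAt_const.congr_of_abs_mem_Ioo (b := |x| + 1) ⟨h4, by linarith⟩
      fun y hy => hK.eq_zero y (Or.inr hy.1.le)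

theorem measurable (hK : PlateauKernel v P₁ P₂ K) : Measurable K := by
  have hS : {x : ℝ | |x| ∈ ({1, 2, 3, 4} : Set ℝ)}.Countable := by
    refine (Set.toFinite ({1, -1, 2, -2, 3, -3, 4, -4} : Set ℝ)).countable.mono fun x hx => ?_
    simp only [mem_ofPred_eq, mem_insert_iff, mem_singleton_iff] at hx ⊢
    rcases hx with h | h | h | h <;> rcases (abs_eq (by norm_num)).mp h with h' | h' <;> simp [h']
  refine measurable_of_countable_not_continuousAt (hS.mono fun x hx => ?_)
  by_contra habs
  exact hx (hK.continuousAt habs)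

theorem integrable_pow (hK : PlateauKernel v P₁ P₂ K) {l : ℕ} (hl : l ≠ 0) :
    Integrable fun x => K x ^ l := by
  refine IntegrableOn.integrable_of_forall_notMem_eq_zero (s := Icc (-4) 4) ?_ fun x hx => ?_
  · refine Measure.integrableOn_of_bounded (M := 1) (by simp)
      (hK.measurable.pow_const l).aestronglyMeasurable (ae_of_all _ fun x => ?_)
    rw [Real.norm_of_nonneg (pow_nonneg (hK.nonneg x) l)]
    exact pow_le_one₀ (hK.nonneg x) (hK.le_one x)
  · have : 4 ≤ |x| := by
      rw [mem_Icc, ← abs_le, not_le] at hx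
      exact hx.le
    rw [hK.eq_zero x (Or.inr this), zero_pow hl]

theorem integral_pow_pos (hK : PlateauKernel v P₁ P₂ K) {l : ℕ} (hl : l ≠ 0) :
    0 < ∫ x, K x ^ l := by
  have hint := hK.integrable_pow hl
  have hone : ∀ x ∈ Icc (2 : ℝ) 3, 1 ≤ K x ^ l := fun x ⟨h2, h3⟩ => by
    have habs : |x| = x := abs_of_pos (by linarith)
    rw [hK.eq_one x (habs.symm ▸ h2) (habs.symm ▸ h3), one_pow]
  calc (0 : ℝ) < volume.real (Icc (2 : ℝ) 3) • 1 := by norm_num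
    _ ≤ ∫ x in Icc (2 : ℝ) 3, K x ^ l :=
        setIntegral_ge_of_const_le measurableSet_Icc (by simp) hone hint.integrableOn
    _ ≤ ∫ x, K x ^ l :=
        setIntegral_le_integral hint (ae_of_all _ fun x => pow_nonneg (hK.nonneg x) l)

theorem exists_pow_bounds_left (hK : PlateauKernel v P₁ P₂ K)
    (hP₁ : ∀ x ∈ Icc (1 : ℝ) 2, P₁ x ≠ 0) (l : ℕ) :
    ∃ m M, 0 < m ∧ 0 ≤ M ∧ ∀ x, 1 < |x| → |x| < 2 →
      m * (|x| - 1) ^ (l * v) ≤ K x ^ l ∧ K x ^ l ≤ M * (|x| - 1) ^ (l * v) := by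
  obtain ⟨m, M, hm, hmM, hbound⟩ := isCompact_Icc.exists_forall_mem_Icc_of_pos
    hK.continuousOn_left.abs fun x hx => abs_pos.mpr (hP₁ x hx)
  refine ⟨m ^ l, M ^ l, pow_pos hm l, pow_nonneg (hm.le.trans hmM) l, fun x h1 h2 => ?_⟩
  have hpos : 0 < (|x| - 1) ^ v := pow_pos (sub_pos.mpr h1) v
  have hKx := hK.eq_left x h1 h2
  -- `K ≥ 0` forces `P₁ ≥ 0` on `(1, 2)`
  have hP_nonneg : 0 ≤ P₁ |x| := (mul_nonneg_iff_of_pos_left hpos).mp (hKx ▸ hK.nonneg x)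
  obtain ⟨hmP, hPM⟩ := hbound |x| ⟨h1.le, h2.le⟩
  rw [abs_of_nonneg hP_nonneg] at hmP hPM
  rw [pow_mul', ← mul_pow, ← mul_pow, hKx]
  exact ⟨pow_le_pow_left₀ (mul_nonneg hm.le hpos.le)
      (by rw [mul_comm m]; exact mul_le_mul_of_nonneg_left hmP hpos.le) l,
    pow_le_pow_left₀ (hKx ▸ hK.nonneg x)
      (by rw [mul_comm M]; exact mul_le_mul_of_nonneg_left hPM hpos.le) l⟩

theorem abs_mem_Ioo_of_ne_zero (hK : PlateauKernel v P₁ P₂ K) {x : ℝ} (hx : K x ≠ 0) :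
    1 < |x| ∧ |x| < 4 := by
  by_contra h
  rw [not_and_or, not_lt, not_lt] at h
  exact hx (hK.eq_zero x h)

theorem exists_integral_mem_Icc_mul_laplaceIntegral (hK : PlateauKernel v P₁ P₂ K) {l : ℕ}
    (hl : l ≠ 0) (A : ℝ) {G : ℝ} (hG : 0 ≤ G) (α : ℝ) :
    ∃ c C, 0 < c ∧ c ≤ C ∧ ∀ h, 0 < h → h ≤ 1 →
      c * h ^ (2 * A - 1) * laplaceIntegral (fun x => K x ^ l) α (G * h ^ (-α)) ≤
          ∫ ω, (ω ^ 2 + 1) ^ (-A) * exp (-G * |ω| ^ α) * K (ω * h) ^ l ∧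
        ∫ ω, (ω ^ 2 + 1) ^ (-A) * exp (-G * |ω| ^ α) * K (ω * h) ^ l ≤
          C * h ^ (2 * A - 1) * laplaceIntegral (fun x => K x ^ l) α (G * h ^ (-α)) := by
  obtain ⟨c, C, hc, hcC, hw⟩ := exists_rpow_neg_div_sq_add_one_mem_Icc A
  refine ⟨c, C, hc, hcC, fun h hh hh1 => ?_⟩
  have hs : 0 ≤ G * h ^ (-α) := mul_nonneg hG (rpow_nonneg hh.le _)
  obtain ⟨hlo, hhi⟩ := integral_mul_mem_Icc (μ := volume) (f := fun x => ((x / h) ^ 2 + 1) ^ (-A))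
    (by fun_prop : Measurable _).aestronglyMeasurable
    (integrable_exp_neg_mul_rpow_mul (hK.integrable_pow hl) α hs)
    (fun x => mul_nonneg (exp_nonneg _) (pow_nonneg (hK.nonneg x) l)) fun x hx => by
      obtain ⟨h1, h4⟩ := hK.abs_mem_Ioo_of_ne_zero (ne_zero_pow hl (right_ne_zero_of_mul hx))
      exact hw h x hh hh1 h1.le h4.le
  rw [integral_comp_mul_right_eq K A G α l hh, rpow_sub_one hh.ne']
  constructor
  · calc c * (h ^ (2 * A) / h) * laplaceIntegral (fun x => K x ^ l) α (G * h ^ (-α))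
        = h⁻¹ * (c * h ^ (2 * A) * laplaceIntegral (fun x => K x ^ l) α (G * h ^ (-α))) := by ring
      _ ≤ _ := mul_le_mul_of_nonneg_left hlo (inv_nonneg.mpr hh.le)
  · calc _ ≤ h⁻¹ * (C * h ^ (2 * A) * laplaceIntegral (fun x => K x ^ l) α (G * h ^ (-α))) :=
          mul_le_mul_of_nonneg_left hhi (inv_nonneg.mpr hh.le)
      _ = _ := by ring

theorem exists_integral_mem_Icc_of_eq_zero (hK : PlateauKernel v P₁ P₂ K) {l : ℕ} (hl : l ≠ 0)
    (A : ℝ) {G : ℝ} (hG : G = 0) (α : ℝ) :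
    ∃ c C h₀ : ℝ, 0 < c ∧ c ≤ C ∧ 0 < h₀ ∧ ∀ h : ℝ, 0 < h → h < h₀ →
      c * h ^ (2 * A - 1) ≤ ∫ ω, (ω ^ 2 + 1) ^ (-A) * exp (-G * |ω| ^ α) * K (ω * h) ^ l ∧
        ∫ ω, (ω ^ 2 + 1) ^ (-A) * exp (-G * |ω| ^ α) * K (ω * h) ^ l ≤ C * h ^ (2 * A - 1) := by
  obtain ⟨c, C, hc, hcC, hJ⟩ := hK.exists_integral_mem_Icc_mul_laplaceIntegral hl A hG.ge α
  have hI : ∀ h, laplaceIntegral (fun x => K x ^ l) α (G * h ^ (-α)) = ∫ x, K x ^ l := fun h => by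
    simp [laplaceIntegral, hG]
  have hpos := hK.integral_pow_pos hl
  refine ⟨c * ∫ x, K x ^ l, C * ∫ x, K x ^ l, 1, mul_pos hc hpos,
    mul_le_mul_of_nonneg_right hcC hpos.le, one_pos, fun h hh hh1 => ?_⟩
  rw [mul_right_comm c, mul_right_comm C, ← hI h]
  exact hJ h hh hh1.le

theorem exists_integral_mem_Icc_of_pos (hK : PlateauKernel v P₁ P₂ K)
    (hP₁ : ∀ x ∈ Icc (1 : ℝ) 2, P₁ x ≠ 0) {l : ℕ} (hl : l ≠ 0) (A : ℝ) {G α : ℝ} (hG : 0 < G)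
    (hα : 0 < α) :
    ∃ c C h₀ : ℝ, 0 < c ∧ c ≤ C ∧ 0 < h₀ ∧ ∀ h : ℝ, 0 < h → h < h₀ →
      c * h ^ (2 * A + α * ((l : ℝ) * (v : ℝ) + 1) - 1) * exp (-G * h ^ (-α)) ≤
          ∫ ω, (ω ^ 2 + 1) ^ (-A) * exp (-G * |ω| ^ α) * K (ω * h) ^ l ∧
        ∫ ω, (ω ^ 2 + 1) ^ (-A) * exp (-G * |ω| ^ α) * K (ω * h) ^ l ≤
          C * h ^ (2 * A + α * ((l : ℝ) * (v : ℝ) + 1) - 1) * exp (-G * h ^ (-α)) := by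
  obtain ⟨m, M, hm, hM, hKl⟩ := hK.exists_pow_bounds_left hP₁ l
  obtain ⟨c₁, hc₁, hlow⟩ := exists_le_laplaceIntegral hα.le hm (hK.integrable_pow hl)
    (fun x => pow_nonneg (hK.nonneg x) l) fun x h1 h2 => (hKl x h1 h2).1
  obtain ⟨C₁, hup⟩ := exists_laplaceIntegral_le hα hM (hK.integrable_pow hl)
    (fun x => pow_le_one₀ (hK.nonneg x) (hK.le_one x))
    (fun x hx => by rw [hK.eq_zero x hx, zero_pow hl]) fun x h1 h2 => (hKl x h1 h2).2
  obtain ⟨c, C, hc, hcC, hJ⟩ := hK.exists_integral_mem_Icc_mul_laplaceIntegral hl A hG.le α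
  have hc' : 0 < c * c₁ * (G ^ (l * v + 1))⁻¹ := by positivity
  refine ⟨_, max _ (C * C₁ * (G ^ (l * v + 1))⁻¹), min 1 (G ^ α⁻¹), hc', le_max_left _ _,
    lt_min one_pos (rpow_pos_of_pos hG _), fun h hh hh₀ => ?_⟩
  have hs := one_le_mul_rpow_neg hG hα hh (hh₀.le.trans (min_le_right _ _))
  have hscale := rpow_mul_inv_pow_mul_exp hh (G := G) A α (l * v)
  push_cast at hscale
  obtain ⟨hJlo, hJhi⟩ := hJ h hh (hh₀.le.trans (min_le_left _ _))
  set s := G * h ^ (-α)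
  constructor
  · calc _ = c * (h ^ (2 * A - 1) * (c₁ * ((s ^ (l * v + 1))⁻¹ * exp (-s)))) := by
          linear_combination (-(c * c₁)) * hscale
      _ ≤ c * (h ^ (2 * A - 1) * laplaceIntegral (fun x => K x ^ l) α s) := by
          gcongr; exact hlow s hs
      _ ≤ _ := by rw [← mul_assoc]; exact hJlo
  · calc _ ≤ C * h ^ (2 * A - 1) * laplaceIntegral (fun x => K x ^ l) α s := hJhi
      _ ≤ C * h ^ (2 * A - 1) * (C₁ * ((s ^ (l * v + 1))⁻¹ * exp (-s))) := by
          have := hc.le.trans hcC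
          gcongr; exact hup s (by linarith)
      _ = C * C₁ * (G ^ (l * v + 1))⁻¹ * h ^ (2 * A + α * ((l : ℝ) * (v : ℝ) + 1) - 1) *
            exp (-G * h ^ (-α)) := by
          linear_combination (C * C₁) * hscale
      _ ≤ _ := by gcongr; exact le_max_right _ _

end PlateauKernel

theorem stmt_18_general (v : ℕ) (P₁ P₂ : ℝ → ℝ)
    (hP₁cont : ContinuousOn P₁ (Set.Icc 1 2))
    (hP₁ne : ∀ x ∈ Set.Icc (1 : ℝ) 2, P₁ x ≠ 0)
    (hP₂cont : ContinuousOn P₂ (Set.Icc 3 4))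
    (K : ℝ → ℝ)
    (hK₁ : ∀ ω : ℝ, 1 < |ω| → |ω| < 2 → K ω = (|ω| - 1) ^ v * P₁ |ω|)
    (hK₂ : ∀ ω : ℝ, 2 ≤ |ω| → |ω| ≤ 3 → K ω = 1)
    (hK₃ : ∀ ω : ℝ, 3 < |ω| → |ω| < 4 → K ω = (4 - |ω|) ^ v * P₂ |ω|)
    (hK₀ : ∀ ω : ℝ, (|ω| ≤ 1 ∨ 4 ≤ |ω|) → K ω = 0)
    (hKrange : ∀ ω : ℝ, 0 ≤ K ω ∧ K ω ≤ 1)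
    (A G al : ℝ) (l : ℕ) (hl : l = 1 ∨ l = 2) :
    (G = 0 →
      ∃ c C h₀ : ℝ, 0 < c ∧ c ≤ C ∧ 0 < h₀ ∧ ∀ h : ℝ, 0 < h → h < h₀ →
        c * h ^ (2 * A - 1) ≤
            (∫ ω : ℝ, (ω ^ 2 + 1) ^ (-A) * Real.exp (-G * |ω| ^ al) * K (ω * h) ^ l) ∧
          (∫ ω : ℝ, (ω ^ 2 + 1) ^ (-A) * Real.exp (-G * |ω| ^ al) * K (ω * h) ^ l) ≤
            C * h ^ (2 * A - 1)) ∧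
    (0 < G → 0 < al →
      ∃ c C h₀ : ℝ, 0 < c ∧ c ≤ C ∧ 0 < h₀ ∧ ∀ h : ℝ, 0 < h → h < h₀ →
        c * h ^ (2 * A + al * ((l : ℝ) * (v : ℝ) + 1) - 1) * Real.exp (-G * h ^ (-al)) ≤
            (∫ ω : ℝ, (ω ^ 2 + 1) ^ (-A) * Real.exp (-G * |ω| ^ al) * K (ω * h) ^ l) ∧
          (∫ ω : ℝ, (ω ^ 2 + 1) ^ (-A) * Real.exp (-G * |ω| ^ al) * K (ω * h) ^ l) ≤
            C * h ^ (2 * A + al * ((l : ℝ) * (v : ℝ) + 1) - 1) *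
              Real.exp (-G * h ^ (-al))) := by
  have hK : PlateauKernel v P₁ P₂ K :=
    ⟨hP₁cont, hP₂cont, hK₁, hK₂, hK₃, hK₀, fun ω => (hKrange ω).1, fun ω => (hKrange ω).2⟩
  have hl0 : l ≠ 0 := by omega
  exact ⟨fun hG => hK.exists_integral_mem_Icc_of_eq_zero hl0 A hG al,
    fun hG hal => hK.exists_integral_mem_Icc_of_pos hP₁ne hl0 A hG hal⟩

theorem stmt_18 (v : ℕ) (hv : 1 ≤ v) (P₁ P₂ : ℝ → ℝ)
    (hP₁cont : ContinuousOn P₁ (Set.Icc 1 2))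
    (hP₁ne : ∀ x ∈ Set.Icc (1 : ℝ) 2, P₁ x ≠ 0)
    (hP₂cont : ContinuousOn P₂ (Set.Icc 3 4))
    (K : ℝ → ℝ)
    (hK₁ : ∀ ω : ℝ, 1 < |ω| → |ω| < 2 → K ω = (|ω| - 1) ^ v * P₁ |ω|)
    (hK₂ : ∀ ω : ℝ, 2 ≤ |ω| → |ω| ≤ 3 → K ω = 1)
    (hK₃ : ∀ ω : ℝ, 3 < |ω| → |ω| < 4 → K ω = (4 - |ω|) ^ v * P₂ |ω|)
    (hK₀ : ∀ ω : ℝ, (|ω| ≤ 1 ∨ 4 ≤ |ω|) → K ω = 0)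
    (hKrange : ∀ ω : ℝ, 0 ≤ K ω ∧ K ω ≤ 1)
    (A G al : ℝ) (hG : 0 ≤ G) (hal : 0 ≤ al) (l : ℕ) (hl : l = 1 ∨ l = 2) :
    (G = 0 →
      ∃ c C h₀ : ℝ, 0 < c ∧ c ≤ C ∧ 0 < h₀ ∧ ∀ h : ℝ, 0 < h → h < h₀ →
        c * h ^ (2 * A - 1) ≤
            (∫ ω : ℝ, (ω ^ 2 + 1) ^ (-A) * Real.exp (-G * |ω| ^ al) * K (ω * h) ^ l) ∧
          (∫ ω : ℝ, (ω ^ 2 + 1) ^ (-A) * Real.exp (-G * |ω| ^ al) * K (ω * h) ^ l) ≤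
            C * h ^ (2 * A - 1)) ∧
    (0 < G → 0 < al →
      ∃ c C h₀ : ℝ, 0 < c ∧ c ≤ C ∧ 0 < h₀ ∧ ∀ h : ℝ, 0 < h → h < h₀ →
        c * h ^ (2 * A + al * ((l : ℝ) * (v : ℝ) + 1) - 1) * Real.exp (-G * h ^ (-al)) ≤
            (∫ ω : ℝ, (ω ^ 2 + 1) ^ (-A) * Real.exp (-G * |ω| ^ al) * K (ω * h) ^ l) ∧
          (∫ ω : ℝ, (ω ^ 2 + 1) ^ (-A) * Real.exp (-G * |ω| ^ al) * K (ω * h) ^ l) ≤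
            C * h ^ (2 * A + al * ((l : ℝ) * (v : ℝ) + 1) - 1) *
              Real.exp (-G * h ^ (-al))) :=
  stmt_18_general v P₁ P₂ hP₁cont hP₁ne hP₂cont K hK₁ hK₂ hK₃ hK₀ hKrange A G al l hl
end
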